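/- arXiv:1811.09615 — 6 statements merged into one kernel-verified Lean document; each statement's English description precedes it below -/
import Mathlib

section
/- Locality of conditionally convex maps: let D_t : L²(F_T) → L²(F_t) be normalized (D_t(0) = 0) and conditionally convex, i.e. D_t(λX + (1−λ)Y) ≤ λD_t(X) + (1−λ)D_t(Y) a.s. for all X, Y ∈ L²(F_T) and all F_t-measurable λ with 0 ≤ λ ≤ 1. Then for every A ∈ F_t and all X₁, X₂, X ∈ L²(F_T): (i) D_t(1_A X₁ + 1_{A^c} X₂) = 1_A D_t(X₁) + 1_{A^c} D_t(X₂) a.s., and (ii) D_t(1_A X) = 1_A D_t(X) a.s. -/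
/-!
Take `λ = 1_A`, an admissible weight since `A ∈ F_t`. If `Y = X` on `A`, then `Y = λ X + (1 - λ) Y`,
so conditional convexity gives `D Y ≤ D X` on `A`; by symmetry `D X = D Y` a.s. on `A`. Both
identities follow, since `1_A X₁ + 1_{Aᶜ} X₂` agrees with `X₁` on `A` and with `X₂` on `Aᶜ`, and
`1_A X` agrees with `X` on `A` and with `0` on `Aᶜ`, where `D 0 = 0`.
-/

open MeasureTheory Set

section

variable {Ω : Type*} {m0 : MeasurableSpace Ω}

def ConditionallyConvex (p : ENNReal) (μ : Measure Ω) (Ft : MeasurableSpace Ω)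
    (D : (Ω → ℝ) → Ω → ℝ) : Prop :=
  ∀ X Y : Ω → ℝ, MemLp X p μ → MemLp Y p μ →
    ∀ lam : Ω → ℝ, Measurable[Ft] lam → (∀ ω, 0 ≤ lam ω) → (∀ ω, lam ω ≤ 1) →
      D (fun ω => lam ω * X ω + (1 - lam ω) * Y ω) ≤ᵐ[μ]
        fun ω => lam ω * D X ω + (1 - lam ω) * D Y ω

lemma indicator_one_mul_add_one_sub_mul_of_eqOn {A : Set Ω} {X Y : Ω → ℝ} (h : EqOn X Y A) :
    (fun ω => A.indicator 1 ω * X ω + (1 - A.indicator 1 ω) * Y ω) = Y := by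
  funext ω
  by_cases hω : ω ∈ A
  · simp [hω, h hω]
  · simp [hω]

namespace ConditionallyConvex

variable {p : ENNReal} {μ : Measure Ω} {Ft : MeasurableSpace Ω} {D : (Ω → ℝ) → Ω → ℝ}
  {A : Set Ω} {X Y : Ω → ℝ}

lemma ae_le_of_eqOn (hD : ConditionallyConvex p μ Ft D) (hA : MeasurableSet[Ft] A)
    (hX : MemLp X p μ) (hY : MemLp Y p μ) (h : EqOn X Y A) :
    ∀ᵐ ω ∂μ, ω ∈ A → D Y ω ≤ D X ω := by
  have hmix := hD X Y hX hY (A.indicator 1) (measurable_one.indicator hA)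
    (fun ω => indicator_nonneg (fun _ _ => zero_le_one) ω)
    (fun ω => indicator_le_self' (fun _ _ => zero_le_one) ω)
  rw [indicator_one_mul_add_one_sub_mul_of_eqOn h] at hmix
  filter_upwards [hmix] with ω hω hωA
  simpa [hωA] using hω

lemma ae_eq_of_eqOn (hD : ConditionallyConvex p μ Ft D) (hA : MeasurableSet[Ft] A)
    (hX : MemLp X p μ) (hY : MemLp Y p μ) (h : EqOn X Y A) :
    ∀ᵐ ω ∂μ, ω ∈ A → D X ω = D Y ω := by
  filter_upwards [hD.ae_le_of_eqOn hA hX hY h, hD.ae_le_of_eqOn hA hY hX h.symm]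
    with ω hXY hYX hωA
  exact le_antisymm (hYX hωA) (hXY hωA)

lemma ae_eq_indicator_add_indicator_compl (hD : ConditionallyConvex p μ Ft D)
    (hA : MeasurableSet[Ft] A) {Z : Ω → ℝ} (hZ : MemLp Z p μ) (hX : MemLp X p μ)
    (hY : MemLp Y p μ) (hZX : EqOn Z X A) (hZY : EqOn Z Y Aᶜ) :
    D Z =ᵐ[μ] fun ω => A.indicator (D X) ω + Aᶜ.indicator (D Y) ω := by
  filter_upwards [hD.ae_eq_of_eqOn hA hZ hX hZX, hD.ae_eq_of_eqOn hA.compl hZ hY hZY]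
    with ω hωA hωAc
  by_cases hω : ω ∈ A
  · simp [hω, hωA hω]
  · simp [hω, hωAc hω]

end ConditionallyConvex

end

-- `m0` plays the role of `F_T` and `Ft` that of `F_t`.
theorem locality_of_conditionallyConvex_general {Ω : Type*} {m0 : MeasurableSpace Ω}
    (μ : Measure Ω)
    (Ft : MeasurableSpace Ω) (hFt : Ft ≤ m0)
    (D : (Ω → ℝ) → Ω → ℝ)
    (hnorm : D 0 =ᵐ[μ] 0)
    (hconv : ∀ X Y : Ω → ℝ, MemLp X 2 μ → MemLp Y 2 μ →
      ∀ lam : Ω → ℝ, Measurable[Ft] lam → (∀ ω, 0 ≤ lam ω) → (∀ ω, lam ω ≤ 1) →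
      D (fun ω => lam ω * X ω + (1 - lam ω) * Y ω) ≤ᵐ[μ]
        fun ω => lam ω * D X ω + (1 - lam ω) * D Y ω) :
    ∀ A : Set Ω, MeasurableSet[Ft] A →
      (∀ X₁ X₂ : Ω → ℝ, MemLp X₁ 2 μ → MemLp X₂ 2 μ →
        D (fun ω => A.indicator X₁ ω + Aᶜ.indicator X₂ ω) =ᵐ[μ]
          fun ω => A.indicator (D X₁) ω + Aᶜ.indicator (D X₂) ω) ∧
      (∀ X : Ω → ℝ, MemLp X 2 μ →
        D (A.indicator X) =ᵐ[μ] A.indicator (D X)) := by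
  have hD : ConditionallyConvex 2 μ Ft D := hconv
  intro A hA
  have hAm : MeasurableSet[m0] A := hFt A hA
  refine ⟨fun X₁ X₂ hX₁ hX₂ => ?_, fun X hX => ?_⟩
  · refine hD.ae_eq_indicator_add_indicator_compl hA
      (Z := A.indicator X₁ + Aᶜ.indicator X₂)
      ((hX₁.indicator hAm).add (hX₂.indicator hAm.compl)) hX₁ hX₂ ?_ ?_
    · intro ω hω; simp [hω]
    · intro ω hω; simp [hω, notMem_of_mem_compl hω]
  · refine (hD.ae_eq_indicator_add_indicator_compl hA (hX.indicator hAm) hX MemLp.zero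
      (fun ω hω => indicator_of_mem hω X) (fun ω hω => indicator_of_notMem hω X)).trans ?_
    filter_upwards [hnorm] with ω hω
    simp [hω]

/-- **Locality of conditionally convex maps.**  Here the ambient σ-algebra `m0` plays the role
of `F_T` and `Ft ≤ m0` is the σ-algebra `F_t`.  If `D : L²(F_T) → L²(F_t)` is normalized
(`D(0) = 0`) and conditionally convex, then for every `A ∈ F_t`,
(i) `D(1_A X₁ + 1_{Aᶜ} X₂) = 1_A D(X₁) + 1_{Aᶜ} D(X₂)` a.s., and
(ii) `D(1_A X) = 1_A D(X)` a.s. -/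
theorem locality_of_conditionallyConvex {Ω : Type*} {m0 : MeasurableSpace Ω}
    (μ : Measure Ω) [IsProbabilityMeasure μ]
    (Ft : MeasurableSpace Ω) (hFt : Ft ≤ m0)
    (D : (Ω → ℝ) → Ω → ℝ)
    (hDmap : ∀ X : Ω → ℝ, MemLp X 2 μ →
      StronglyMeasurable[Ft] (D X) ∧ MemLp (D X) 2 μ)
    (hnorm : D 0 =ᵐ[μ] 0)
    (hconv : ∀ X Y : Ω → ℝ, MemLp X 2 μ → MemLp Y 2 μ →
      ∀ lam : Ω → ℝ, Measurable[Ft] lam → (∀ ω, 0 ≤ lam ω) → (∀ ω, lam ω ≤ 1) →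
      D (fun ω => lam ω * X ω + (1 - lam ω) * Y ω) ≤ᵐ[μ]
        fun ω => lam ω * D X ω + (1 - lam ω) * D Y ω) :
    ∀ A : Set Ω, MeasurableSet[Ft] A →
      (∀ X₁ X₂ : Ω → ℝ, MemLp X₁ 2 μ → MemLp X₂ 2 μ →
        D (fun ω => A.indicator X₁ ω + Aᶜ.indicator X₂ ω) =ᵐ[μ]
          fun ω => A.indicator (D X₁) ω + Aᶜ.indicator (D X₂) ω) ∧
      (∀ X : Ω → ℝ, MemLp X 2 μ →
        D (A.indicator X) =ᵐ[μ] A.indicator (D X)) :=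
  locality_of_conditionallyConvex_general μ Ft hFt D hnorm hconv
end

section
/- A conditional deviation measure at time s is determined by its time-0 value through the recursive property: let 0 ≤ s ≤ T and let D_0 : L²(F_T) → ℝ and D_s, D'_s : L²(F_T) → L²(F_s) be maps such that both D_s and D'_s are local (D_s(1_A X) = 1_A D_s(X) a.s. and D'_s(1_A X) = 1_A D'_s(X) a.s. for all A ∈ F_s, X ∈ L²(F_T)) and both satisfy the recursion D_0(X) = D_0(E[X|F_s]) + E[D_s(X)] and D_0(X) = D_0(E[X|F_s]) + E[D'_s(X)] for all X ∈ L²(F_T), with D_s(X), D'_s(X) integrable. Then D_s(X) = D'_s(X) almost surely for every X ∈ L²(F_T). -/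
/-!
Applying both recursions to `1_A X` for `A ∈ F_s` and subtracting shows
`E[D_s(1_A X)] = E[D'_s(1_A X)]`; locality turns this into `∫_A D_s X = ∫_A D'_s X`. Two
`F_s`-measurable integrable functions with the same integral over every `F_s`-set agree a.s.
-/

open MeasureTheory

section

variable {Ω E : Type*} [NormedAddCommGroup E] [NormedSpace ℝ E]
  {m m0 : MeasurableSpace Ω} {μ : Measure Ω}

theorem ae_eq_of_forall_setIntegral_eq_of_stronglyMeasurable [CompleteSpace E] (hm : m ≤ m0)
    {f g : Ω → E} (hfm : StronglyMeasurable[m] f) (hgm : StronglyMeasurable[m] g)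
    (hf : Integrable f μ) (hg : Integrable g μ)
    (hfg : ∀ s, MeasurableSet[m] s → ∫ x in s, f x ∂μ = ∫ x in s, g x ∂μ) : f =ᵐ[μ] g := by
  rw [← StronglyMeasurable.ae_eq_trim_iff hm hfm hgm]
  refine (hf.trim hm hfm).ae_eq_of_forall_setIntegral_eq _ _ (hg.trim hm hgm) fun s hs _ => ?_
  rw [← setIntegral_trim hm hfm hs, ← setIntegral_trim hm hgm hs]
  exact hfg s hs

theorem integral_apply_indicator_eq_setIntegral {D : (Ω → E) → Ω → E} {A : Set Ω} {X : Ω → E}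
    (hA : MeasurableSet A) (hloc : D (A.indicator X) =ᵐ[μ] A.indicator (D X)) :
    ∫ ω, D (A.indicator X) ω ∂μ = ∫ ω in A, D X ω ∂μ :=
  (integral_congr_ae hloc).trans (integral_indicator hA)

end

theorem conditional_deviation_determined_by_time_zero_general {Ω : Type*} {m0 : MeasurableSpace Ω}
    (μ : Measure Ω)
    (Fs : MeasurableSpace Ω) (hFs : Fs ≤ m0)
    (D0 : (Ω → ℝ) → ℝ) (Ds Ds' : (Ω → ℝ) → Ω → ℝ)
    -- `Ds` and `Ds'` map `L²(F_T)` into `F_s`-measurable integrable random variables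
    (hDsmap : ∀ X : Ω → ℝ, MemLp X 2 μ →
      StronglyMeasurable[Fs] (Ds X) ∧ Integrable (Ds X) μ)
    (hDs'map : ∀ X : Ω → ℝ, MemLp X 2 μ →
      StronglyMeasurable[Fs] (Ds' X) ∧ Integrable (Ds' X) μ)
    -- locality
    (hDsloc : ∀ A : Set Ω, MeasurableSet[Fs] A → ∀ X : Ω → ℝ, MemLp X 2 μ →
      Ds (A.indicator X) =ᵐ[μ] A.indicator (Ds X))
    (hDs'loc : ∀ A : Set Ω, MeasurableSet[Fs] A → ∀ X : Ω → ℝ, MemLp X 2 μ →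
      Ds' (A.indicator X) =ᵐ[μ] A.indicator (Ds' X))
    -- the recursive property for both `Ds` and `Ds'`
    (hDsrec : ∀ X : Ω → ℝ, MemLp X 2 μ →
      D0 X = D0 (μ[X|Fs]) + ∫ ω, Ds X ω ∂μ)
    (hDs'rec : ∀ X : Ω → ℝ, MemLp X 2 μ →
      D0 X = D0 (μ[X|Fs]) + ∫ ω, Ds' X ω ∂μ) :
    ∀ X : Ω → ℝ, MemLp X 2 μ → Ds X =ᵐ[μ] Ds' X := by
  intro X hX
  obtain ⟨hDsm, hDsi⟩ := hDsmap X hX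
  obtain ⟨hDs'm, hDs'i⟩ := hDs'map X hX
  refine ae_eq_of_forall_setIntegral_eq_of_stronglyMeasurable hFs hDsm hDs'm hDsi hDs'i
    fun A hA => ?_
  have hXA : MemLp (A.indicator X) 2 μ := hX.indicator (hFs A hA)
  have hexp : ∫ ω, Ds (A.indicator X) ω ∂μ = ∫ ω, Ds' (A.indicator X) ω ∂μ := by
    linarith [hDsrec _ hXA, hDs'rec _ hXA]
  rwa [integral_apply_indicator_eq_setIntegral (hFs A hA) (hDsloc A hA X hX),
    integral_apply_indicator_eq_setIntegral (hFs A hA) (hDs'loc A hA X hX)] at hexp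

/-- **A conditional deviation measure at time `s` is determined by its time-`0` value through
the recursive property.**  Here the ambient σ-algebra `m0` plays the role of `F_T` and
`Fs ≤ m0` is the σ-algebra `F_s`.  If `D_s, D'_s : L²(F_T) → L²(F_s)` are local and both
satisfy the recursion `D_0(X) = D_0(E[X|F_s]) + E[D_s(X)]` for the same `D_0`, then
`D_s(X) = D'_s(X)` a.s. for every square-integrable `X`. -/
theorem conditional_deviation_determined_by_time_zero {Ω : Type*} {m0 : MeasurableSpace Ω}
    (μ : Measure Ω) [IsProbabilityMeasure μ]
    (Fs : MeasurableSpace Ω) (hFs : Fs ≤ m0)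
    (D0 : (Ω → ℝ) → ℝ) (Ds Ds' : (Ω → ℝ) → Ω → ℝ)
    -- `Ds` and `Ds'` map `L²(F_T)` into `F_s`-measurable integrable random variables
    (hDsmap : ∀ X : Ω → ℝ, MemLp X 2 μ →
      StronglyMeasurable[Fs] (Ds X) ∧ Integrable (Ds X) μ)
    (hDs'map : ∀ X : Ω → ℝ, MemLp X 2 μ →
      StronglyMeasurable[Fs] (Ds' X) ∧ Integrable (Ds' X) μ)
    -- locality
    (hDsloc : ∀ A : Set Ω, MeasurableSet[Fs] A → ∀ X : Ω → ℝ, MemLp X 2 μ →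
      Ds (A.indicator X) =ᵐ[μ] A.indicator (Ds X))
    (hDs'loc : ∀ A : Set Ω, MeasurableSet[Fs] A → ∀ X : Ω → ℝ, MemLp X 2 μ →
      Ds' (A.indicator X) =ᵐ[μ] A.indicator (Ds' X))
    -- the recursive property for both `Ds` and `Ds'`
    (hDsrec : ∀ X : Ω → ℝ, MemLp X 2 μ →
      D0 X = D0 (μ[X|Fs]) + ∫ ω, Ds X ω ∂μ)
    (hDs'rec : ∀ X : Ω → ℝ, MemLp X 2 μ →
      D0 X = D0 (μ[X|Fs]) + ∫ ω, Ds' X ω ∂μ) :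
    ∀ X : Ω → ℝ, MemLp X 2 μ → Ds X =ᵐ[μ] Ds' X :=
  conditional_deviation_determined_by_time_zero_general μ Fs hFs D0 Ds Ds' hDsmap hDs'map hDsloc
    hDs'loc hDsrec hDs'rec
end

section
/- Discrete-time synthesis of dynamic deviation measures (sufficiency direction of Proposition 1): let I = {t_0 < t_1 < ... < t_n} ⊆ [0,T] with t_n = T, and for each i let D̃_{t_i} : L²(F_T) → L²(F_{t_i}) be an F_{t_i}-conditional convex deviation measure (normalized, satisfying (D1) translation invariance by bounded F_{t_i}-measurable random variables, (D2) positivity with D̃_{t_i}(Y) = 0 a.s. iff Y is a.s. F_{t_i}-measurable, and (D3) conditional convexity). Define for t ∈ I and X ∈ L²(F_T): D_t(X) = E[ Σ_{i : t_i ≥ t, i < n} D̃_{t_i}( E[X|F_{t_{i+1}}] − E[X|F_{t_i}] ) | F_t ]. Then the family (D_t)_{t∈I} satisfies (D1), (D2), (D3), and the recursive property (D5): D_t(X) = D_t(E[X|F_s]) + E[D_s(X)|F_t] a.s. for all t, s ∈ I with t ≤ s. -/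
/-!
Each summand `D̃_{t_k}(E[X|F_{t_{k+1}}] − E[X|F_{t_k}])` of `D_{t_i}(X)` is an
`F_{t_k}`-conditional deviation of a martingale increment, with `F_{t_i} ⊆ F_{t_k}`. Adding a
bounded `F_{t_i}`-measurable variable, or mixing with an `F_{t_i}`-measurable weight, commutes with
the increments, so (D1) and (D3) pass termwise to the sum and through the outer conditional
expectation. For (D2), a sum of nonnegative terms with vanishing conditional expectation vanishes
termwise; each increment is then `F_{t_k}`-measurable, hence zero because its `F_{t_k}`-conditional
mean is zero, and telescoping gives `X = E[X|F_{t_i}]`. For (D5), replacing `X` by `E[X|F_s]`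
keeps the increments before `s` and kills those after `s`, while the tower property turns the
remaining terms into `E[D_s(X)|F_t]`.
-/

open MeasureTheory

/-- An `m`-conditional convex deviation measure on `L²` (the ambient σ-algebra plays the role
of `F_T`): a map `D` into `m`-measurable square-integrable random variables which is
normalized, translation invariant (D1), positive with the `m`-measurability characterization
of the kernel (D2), and conditionally convex (D3). -/
def IsCondDeviation {Ω : Type*} {m0 : MeasurableSpace Ω} (μ : Measure Ω)
    (m : MeasurableSpace Ω) (D : (Ω → ℝ) → Ω → ℝ) : Prop :=
  (∀ X : Ω → ℝ, MemLp X 2 μ → StronglyMeasurable[m] (D X) ∧ MemLp (D X) 2 μ) ∧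
  -- normalization
  D 0 =ᵐ[μ] 0 ∧
  -- (D1) translation invariance
  (∀ X : Ω → ℝ, MemLp X 2 μ → ∀ c : Ω → ℝ, Measurable[m] c → (∃ C : ℝ, ∀ ω, |c ω| ≤ C) →
    D (X + c) =ᵐ[μ] D X) ∧
  -- (D2) positivity
  (∀ X : Ω → ℝ, MemLp X 2 μ → (0 ≤ᵐ[μ] D X) ∧
    (D X =ᵐ[μ] 0 ↔ ∃ Y : Ω → ℝ, Measurable[m] Y ∧ X =ᵐ[μ] Y)) ∧
  -- (D3) conditional convexity
  (∀ X Y : Ω → ℝ, MemLp X 2 μ → MemLp Y 2 μ →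
    ∀ lam : Ω → ℝ, Measurable[m] lam → (∀ ω, 0 ≤ lam ω) → (∀ ω, lam ω ≤ 1) →
    D (fun ω => lam ω * X ω + (1 - lam ω) * Y ω) ≤ᵐ[μ]
      fun ω => lam ω * D X ω + (1 - lam ω) * D Y ω)

open Filter Finset Topology

section General

variable {Ω : Type*} {m m0 : MeasurableSpace Ω} {μ : Measure Ω}

lemma eventuallyLE_finsetSum {ι : Type*} (s : Finset ι) {f g : ι → Ω → ℝ}
    (h : ∀ k ∈ s, f k ≤ᵐ[μ] g k) :
    (fun ω => ∑ k ∈ s, f k ω) ≤ᵐ[μ] fun ω => ∑ k ∈ s, g k ω := by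
  filter_upwards [(eventually_all_finset s).2 h] with ω hω using sum_le_sum hω

lemma eventuallyEq_finsetSum {ι : Type*} (s : Finset ι) {f g : ι → Ω → ℝ}
    (h : ∀ k ∈ s, f k =ᵐ[μ] g k) :
    (fun ω => ∑ k ∈ s, f k ω) =ᵐ[μ] fun ω => ∑ k ∈ s, g k ω := by
  filter_upwards [(eventually_all_finset s).2 h] with ω hω using sum_congr rfl hω

lemma MeasureTheory.MemLp.convexComb {p : ENNReal} {lam U V : Ω → ℝ}
    (hlam : AEStronglyMeasurable lam μ) (hlam0 : ∀ ω, 0 ≤ lam ω) (hlam1 : ∀ ω, lam ω ≤ 1)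
    (hU : MemLp U p μ) (hV : MemLp V p μ) :
    MemLp (fun ω => lam ω * U ω + (1 - lam ω) * V ω) p μ := by
  have hlam' : MemLp lam ⊤ μ := memLp_top_of_bound hlam 1 <| .of_forall fun ω => by
    rw [Real.norm_of_nonneg (hlam0 ω)]; exact hlam1 ω
  have hlam'' : MemLp (fun ω => 1 - lam ω) ⊤ μ :=
    memLp_top_of_bound (aestronglyMeasurable_const.sub hlam) 1 <| .of_forall fun ω => by
      rw [Real.norm_of_nonneg (sub_nonneg.2 (hlam1 ω))]; linarith [hlam0 ω]
  exact (hU.mul' hlam').add (hV.mul' hlam'')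

lemma condExp_convexComb_ae_eq [IsFiniteMeasure μ] (hm : m ≤ m0) {lam U V : Ω → ℝ}
    (hlam : StronglyMeasurable[m] lam) (hlam0 : ∀ ω, 0 ≤ lam ω) (hlam1 : ∀ ω, lam ω ≤ 1)
    (hU : Integrable U μ) (hV : Integrable V μ) :
    μ[fun ω => lam ω * U ω + (1 - lam ω) * V ω | m] =ᵐ[μ]
      fun ω => lam ω * μ[U | m] ω + (1 - lam ω) * μ[V | m] ω := by
  have hlam' : StronglyMeasurable[m] (1 - lam) := stronglyMeasurable_const.sub hlam
  have hbdd : ∀ᵐ ω ∂μ, ‖lam ω‖ ≤ 1 := .of_forall fun ω => by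
    rw [Real.norm_of_nonneg (hlam0 ω)]; exact hlam1 ω
  have hbdd' : ∀ᵐ ω ∂μ, ‖(1 - lam) ω‖ ≤ 1 := .of_forall fun ω => by
    rw [Pi.sub_apply, Pi.one_apply, Real.norm_of_nonneg (sub_nonneg.2 (hlam1 ω))]
    linarith [hlam0 ω]
  have hlamU : Integrable (fun ω => lam ω * U ω) μ :=
    hU.bdd_mul (hlam.mono hm).aestronglyMeasurable hbdd
  have hlamV : Integrable (fun ω => (1 - lam) ω * V ω) μ :=
    hV.bdd_mul (hlam'.mono hm).aestronglyMeasurable hbdd'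
  exact (condExp_add hlamU hlamV m).trans
    ((condExp_stronglyMeasurable_mul_of_bound hm hlam hU 1 hbdd).add
      (condExp_stronglyMeasurable_mul_of_bound hm hlam' hV 1 hbdd'))

lemma ae_eq_zero_of_condExp_ae_eq_zero [IsFiniteMeasure μ] (hm : m ≤ m0) {f : Ω → ℝ}
    (hf : Integrable f μ) (hf0 : 0 ≤ᵐ[μ] f) (h : μ[f | m] =ᵐ[μ] 0) : f =ᵐ[μ] 0 := by
  refine (integral_eq_zero_iff_of_nonneg_ae hf0 hf).1 ?_
  rw [← integral_condExp hm, integral_congr_ae h, integral_zero']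

end General

namespace IsCondDeviation

variable {Ω : Type*} {m m0 : MeasurableSpace Ω} {μ : Measure Ω} {D : (Ω → ℝ) → Ω → ℝ}
  {A B X Y : Ω → ℝ}

lemma memLp (hD : IsCondDeviation μ m D) (hX : MemLp X 2 μ) : MemLp (D X) 2 μ :=
  (hD.1 X hX).2

lemma nonneg (hD : IsCondDeviation μ m D) (hX : MemLp X 2 μ) : 0 ≤ᵐ[μ] D X :=
  (hD.2.2.2.1 X hX).1

lemma ae_eq_zero_iff (hD : IsCondDeviation μ m D) (hX : MemLp X 2 μ) :
    D X =ᵐ[μ] 0 ↔ ∃ Y : Ω → ℝ, Measurable[m] Y ∧ X =ᵐ[μ] Y :=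
  (hD.2.2.2.1 X hX).2

lemma ae_eq_zero_of_ae_eq_zero (hD : IsCondDeviation μ m D) (hX : MemLp X 2 μ)
    (h : X =ᵐ[μ] 0) : D X =ᵐ[μ] 0 :=
  (hD.ae_eq_zero_iff hX).2 ⟨0, measurable_const, h⟩

lemma convexComb_le (hD : IsCondDeviation μ m D) (hX : MemLp X 2 μ) (hY : MemLp Y 2 μ)
    {lam : Ω → ℝ} (hlam : Measurable[m] lam) (hlam0 : ∀ ω, 0 ≤ lam ω) (hlam1 : ∀ ω, lam ω ≤ 1) :
    D (fun ω => lam ω * X ω + (1 - lam ω) * Y ω) ≤ᵐ[μ]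
      fun ω => lam ω * D X ω + (1 - lam ω) * D Y ω :=
  hD.2.2.2.2 X Y hX hY lam hlam hlam0 hlam1

lemma convexComb_const_le (hD : IsCondDeviation μ m D) (hX : MemLp X 2 μ) (hY : MemLp Y 2 μ)
    {θ : ℝ} (hθ0 : 0 ≤ θ) (hθ1 : θ ≤ 1) :
    D (fun ω => θ * X ω + (1 - θ) * Y ω) ≤ᵐ[μ] fun ω => θ * D X ω + (1 - θ) * D Y ω :=
  hD.convexComb_le hX hY measurable_const (fun _ => hθ0) (fun _ => hθ1)

/- `B = θ * (θ⁻¹ * A) + (1 - θ) * ((1 - θ)⁻¹ * (B - A))`, and the second point is a.e. zero. -/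
lemma le_mul_inv_of_ae_eq (hD : IsCondDeviation μ m D) (hA : MemLp A 2 μ) (hB : MemLp B 2 μ)
    (hAB : A =ᵐ[μ] B) {θ : ℝ} (hθ0 : 0 < θ) (hθ1 : θ < 1) :
    D B ≤ᵐ[μ] fun ω => θ * D (fun ω' => θ⁻¹ * A ω') ω := by
  have hθ1' : 1 - θ ≠ 0 := (sub_pos.2 hθ1).ne'
  have hW : MemLp (fun ω => (1 - θ)⁻¹ * (B ω - A ω)) 2 μ := (hB.sub hA).const_mul _
  have hW0 : D (fun ω => (1 - θ)⁻¹ * (B ω - A ω)) =ᵐ[μ] 0 :=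
    hD.ae_eq_zero_of_ae_eq_zero hW (by filter_upwards [hAB] with ω h using by simp [h])
  have hsplit : (fun ω => θ * (θ⁻¹ * A ω) + (1 - θ) * ((1 - θ)⁻¹ * (B ω - A ω))) = B := by
    funext ω
    field_simp
    ring
  have hconv := hD.convexComb_const_le (hA.const_mul θ⁻¹) hW hθ0.le hθ1.le
  rw [hsplit] at hconv
  filter_upwards [hconv, hW0] with ω h h0
  simpa [h0] using h

lemma const_mul_le (hD : IsCondDeviation μ m D) (hA : MemLp A 2 μ) {s : ℝ} (hs1 : 1 ≤ s)
    (hs2 : s ≤ 2) :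
    D (fun ω => s * A ω) ≤ᵐ[μ]
      fun ω => (2 - s) * D A ω + (s - 1) * D (fun ω' => 2 * A ω') ω := by
  have hconv := hD.convexComb_const_le hA (hA.const_mul 2) (θ := 2 - s) (by linarith) (by linarith)
  have hs : (fun ω => (2 - s) * A ω + (1 - (2 - s)) * (2 * A ω)) = fun ω => s * A ω := by
    funext ω
    ring
  rw [hs] at hconv
  filter_upwards [hconv] with ω h
  linarith

lemma le_add_mul_of_ae_eq (hD : IsCondDeviation μ m D) (hA : MemLp A 2 μ) (hB : MemLp B 2 μ)
    (hAB : A =ᵐ[μ] B) {ε : ℝ} (hε0 : 0 < ε) (hε : ε ≤ 1 / 2) :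
    D B ≤ᵐ[μ] fun ω => D A ω + ε * (D (fun ω' => 2 * A ω') ω - 2 * D A ω) := by
  have hθ : 0 < 1 - ε := by linarith
  have hs1 : 1 ≤ (1 - ε)⁻¹ := (one_le_inv₀ hθ).2 (by linarith)
  have hs2 : (1 - ε)⁻¹ ≤ 2 := (inv_le_comm₀ hθ two_pos).2 (by linarith)
  filter_upwards [hD.le_mul_inv_of_ae_eq hA hB hAB hθ (by linarith), hD.const_mul_le hA hs1 hs2]
    with ω h1 h2
  calc D B ω ≤ (1 - ε) * D (fun ω' => (1 - ε)⁻¹ * A ω') ω := h1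
    _ ≤ (1 - ε) * ((2 - (1 - ε)⁻¹) * D A ω + ((1 - ε)⁻¹ - 1) * D (fun ω' => 2 * A ω') ω) := by
      gcongr
    _ = D A ω + ε * (D (fun ω' => 2 * A ω') ω - 2 * D A ω) := by
      field_simp
      ring

/-- `D` acts on functions rather than on a.e.-classes, but (D2) and (D3) force it to respect
a.e. equality: letting `ε → 0` above. -/
lemma le_of_ae_eq (hD : IsCondDeviation μ m D) (hA : MemLp A 2 μ) (hB : MemLp B 2 μ)
    (hAB : A =ᵐ[μ] B) : D B ≤ᵐ[μ] D A := by
  have hε : ∀ k : ℕ, 0 < ((k : ℝ) + 2)⁻¹ ∧ ((k : ℝ) + 2)⁻¹ ≤ 1 / 2 := fun k =>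
    ⟨by positivity, by rw [one_div]; gcongr; linarith [k.cast_nonneg (α := ℝ)]⟩
  have h : ∀ᵐ ω ∂μ, ∀ k : ℕ, D B ω ≤
      D A ω + ((k : ℝ) + 2)⁻¹ * (D (fun ω' => 2 * A ω') ω - 2 * D A ω) :=
    ae_all_iff.2 fun k => hD.le_add_mul_of_ae_eq hA hB hAB (hε k).1 (hε k).2
  filter_upwards [h] with ω hω
  have hlim : Tendsto (fun k : ℕ => ((k : ℝ) + 2)⁻¹) atTop (𝓝 0) :=
    tendsto_inv_atTop_zero.comp (tendsto_atTop_add_const_right _ 2 tendsto_natCast_atTop_atTop)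
  have hlim' := tendsto_const_nhds (x := D A ω).add
    (hlim.mul_const (D (fun ω' => 2 * A ω') ω - 2 * D A ω))
  rw [zero_mul, add_zero] at hlim'
  exact ge_of_tendsto' hlim' hω

lemma congr_ae (hD : IsCondDeviation μ m D) (hA : MemLp A 2 μ) (hB : MemLp B 2 μ)
    (hAB : A =ᵐ[μ] B) : D A =ᵐ[μ] D B :=
  (hD.le_of_ae_eq hB hA hAB.symm).antisymm (hD.le_of_ae_eq hA hB hAB)

end IsCondDeviation

section Synthesis

variable {Ω : Type*} {m0 : MeasurableSpace Ω}

noncomputable def condExpIncrement (μ : Measure Ω) {n : ℕ} (ℱ : Filtration (Fin (n + 1)) m0)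
    (k : Fin n) (X : Ω → ℝ) : Ω → ℝ :=
  fun ω => μ[X | ℱ k.succ] ω - μ[X | ℱ k.castSucc] ω

noncomputable def synthesizedSum (μ : Measure Ω) {n : ℕ} (ℱ : Filtration (Fin (n + 1)) m0)
    (Dtil : Fin (n + 1) → (Ω → ℝ) → Ω → ℝ) (i : Fin (n + 1)) (X : Ω → ℝ) : Ω → ℝ :=
  fun ω => ∑ k ∈ univ.filter (fun k : Fin n => i ≤ k.castSucc),
    Dtil k.castSucc (condExpIncrement μ ℱ k X) ω

noncomputable def synthesizedDeviation (μ : Measure Ω) {n : ℕ}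
    (ℱ : Filtration (Fin (n + 1)) m0) (Dtil : Fin (n + 1) → (Ω → ℝ) → Ω → ℝ) (i : Fin (n + 1))
    (X : Ω → ℝ) : Ω → ℝ :=
  μ[synthesizedSum μ ℱ Dtil i X | ℱ i]

variable {μ : Measure Ω} {n : ℕ} {ℱ : Filtration (Fin (n + 1)) m0}
  {X Y : Ω → ℝ} {i j : Fin (n + 1)} {k : Fin n}

lemma integrable_condExpIncrement : Integrable (condExpIncrement μ ℱ k X) μ :=
  integrable_condExp.sub integrable_condExp

lemma memLp_condExpIncrement (hX : MemLp X 2 μ) : MemLp (condExpIncrement μ ℱ k X) 2 μ :=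
  (hX.condExp one_le_two).sub (hX.condExp one_le_two)

lemma condExpIncrement_add (hX : Integrable X μ) (hY : Integrable Y μ) :
    condExpIncrement μ ℱ k (X + Y) =ᵐ[μ]
      condExpIncrement μ ℱ k X + condExpIncrement μ ℱ k Y := by
  filter_upwards [condExp_add hX hY (ℱ k.succ), condExp_add hX hY (ℱ k.castSucc)] with ω h1 h2
  simp only [condExpIncrement, Pi.add_apply, h1, h2]
  ring

lemma condExpIncrement_ae_eq_zero [IsFiniteMeasure μ] (hik : i ≤ k.castSucc)
    (hX : AEStronglyMeasurable[ℱ i] X μ) (hXi : Integrable X μ) :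
    condExpIncrement μ ℱ k X =ᵐ[μ] 0 := by
  filter_upwards
    [condExp_of_aestronglyMeasurable' (ℱ.le _)
      (hX.mono (ℱ.mono (hik.trans k.castSucc_le_succ))) hXi,
    condExp_of_aestronglyMeasurable' (ℱ.le _) (hX.mono (ℱ.mono hik)) hXi] with ω h1 h2
  simp [condExpIncrement, h1, h2]

lemma condExpIncrement_convexComb [IsFiniteMeasure μ] (hik : i ≤ k.castSucc) {lam : Ω → ℝ}
    (hlam : StronglyMeasurable[ℱ i] lam) (hlam0 : ∀ ω, 0 ≤ lam ω) (hlam1 : ∀ ω, lam ω ≤ 1)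
    (hX : Integrable X μ) (hY : Integrable Y μ) :
    condExpIncrement μ ℱ k (fun ω => lam ω * X ω + (1 - lam ω) * Y ω) =ᵐ[μ]
      fun ω => lam ω * condExpIncrement μ ℱ k X ω + (1 - lam ω) * condExpIncrement μ ℱ k Y ω := by
  filter_upwards
    [condExp_convexComb_ae_eq (ℱ.le _) (hlam.mono (ℱ.mono (hik.trans k.castSucc_le_succ)))
      hlam0 hlam1 hX hY,
    condExp_convexComb_ae_eq (ℱ.le _) (hlam.mono (ℱ.mono hik)) hlam0 hlam1 hX hY] with ω h1 h2
  simp only [condExpIncrement, h1, h2]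
  ring

lemma condExpIncrement_condExp_of_succ_le [IsFiniteMeasure μ] (hkj : k.succ ≤ j) :
    condExpIncrement μ ℱ k (μ[X | ℱ j]) =ᵐ[μ] condExpIncrement μ ℱ k X := by
  filter_upwards [condExp_condExp_of_le (f := X) (ℱ.mono hkj) (ℱ.le j),
    condExp_condExp_of_le (f := X) (ℱ.mono (k.castSucc_le_succ.trans hkj)) (ℱ.le j)] with ω h1 h2
  simp only [condExpIncrement, h1, h2]

lemma condExp_condExpIncrement [IsFiniteMeasure μ] :
    μ[condExpIncrement μ ℱ k X | ℱ k.castSucc] =ᵐ[μ] 0 := by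
  change μ[μ[X | ℱ k.succ] - μ[X | ℱ k.castSucc] | ℱ k.castSucc] =ᵐ[μ] 0
  filter_upwards [condExp_sub (m := ℱ k.castSucc) (integrable_condExp (f := X) (m := ℱ k.succ))
      (integrable_condExp (f := X) (m := ℱ k.castSucc)),
    condExp_condExp_of_le (f := X) (ℱ.mono k.castSucc_le_succ) (ℱ.le k.succ),
    condExp_condExp_of_le (f := X) le_rfl (ℱ.le k.castSucc)] with ω h h1 h2
  simp [h, h1, h2]

lemma condExpIncrement_ae_eq_zero_of_aestronglyMeasurable [IsFiniteMeasure μ]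
    (h : AEStronglyMeasurable[ℱ k.castSucc] (condExpIncrement μ ℱ k X) μ) :
    condExpIncrement μ ℱ k X =ᵐ[μ] 0 :=
  (condExp_of_aestronglyMeasurable' (ℱ.le _) h integrable_condExpIncrement).symm.trans
    condExp_condExpIncrement

lemma condExp_ae_eq_of_condExpIncrement_ae_eq_zero
    (h : ∀ k : Fin n, i ≤ k.castSucc → condExpIncrement μ ℱ k X =ᵐ[μ] 0) :
    ∀ j, i ≤ j → μ[X | ℱ j] =ᵐ[μ] μ[X | ℱ i] := by
  intro j
  induction j using Fin.induction with
  | zero =>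
    intro hi
    rw [Fin.le_zero_iff.1 hi]
  | succ k ih =>
    intro hik
    by_cases hk : i ≤ k.castSucc
    · filter_upwards [h k hk, ih hk] with ω h1 h2
      simp only [condExpIncrement, Pi.zero_apply, sub_eq_zero] at h1
      rw [h1, h2]
    · rw [le_antisymm hik (Fin.castSucc_lt_iff_succ_le.1 (not_le.1 hk))]

end Synthesis

section SynthesizedDeviation

variable {Ω : Type*} {m0 : MeasurableSpace Ω} {μ : Measure Ω} {n : ℕ}
  {ℱ : Filtration (Fin (n + 1)) m0} {Dtil : Fin (n + 1) → (Ω → ℝ) → Ω → ℝ}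
  {X Y : Ω → ℝ} {i j : Fin (n + 1)}

lemma memLp_synthesizedSum (hDtil : ∀ k, IsCondDeviation μ (ℱ k) (Dtil k)) (hX : MemLp X 2 μ) :
    MemLp (synthesizedSum μ ℱ Dtil i X) 2 μ :=
  memLp_finsetSum _ fun _ _ => (hDtil _).memLp (memLp_condExpIncrement hX)

lemma ae_forall_deviation_condExpIncrement_nonneg (hDtil : ∀ k, IsCondDeviation μ (ℱ k) (Dtil k))
    (hX : MemLp X 2 μ) :
    ∀ᵐ ω ∂μ, ∀ k : Fin n, 0 ≤ Dtil k.castSucc (condExpIncrement μ ℱ k X) ω :=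
  ae_all_iff.2 fun k => (hDtil k.castSucc).nonneg (memLp_condExpIncrement hX)

lemma synthesizedSum_nonneg (hDtil : ∀ k, IsCondDeviation μ (ℱ k) (Dtil k))
    (hX : MemLp X 2 μ) : 0 ≤ᵐ[μ] synthesizedSum μ ℱ Dtil i X := by
  filter_upwards [ae_forall_deviation_condExpIncrement_nonneg hDtil hX] with ω hω
  exact sum_nonneg fun k _ => hω k

lemma synthesizedSum_ae_eq_zero [IsFiniteMeasure μ] (hDtil : ∀ k, IsCondDeviation μ (ℱ k) (Dtil k))
    (hX : MemLp X 2 μ) (hXi : AEStronglyMeasurable[ℱ i] X μ) :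
    synthesizedSum μ ℱ Dtil i X =ᵐ[μ] 0 := by
  refine (eventuallyEq_finsetSum _ (g := fun _ => 0) fun k hk =>
    (hDtil k.castSucc).ae_eq_zero_of_ae_eq_zero (memLp_condExpIncrement hX)
      (condExpIncrement_ae_eq_zero (mem_filter.1 hk).2 hXi (hX.integrable one_le_two))).trans ?_
  exact .of_forall fun ω => by simp

lemma condExpIncrement_ae_eq_zero_of_synthesizedSum_ae_eq_zero [IsFiniteMeasure μ]
    (hDtil : ∀ k, IsCondDeviation μ (ℱ k) (Dtil k)) (hX : MemLp X 2 μ)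
    (h : synthesizedSum μ ℱ Dtil i X =ᵐ[μ] 0) {k : Fin n} (hik : i ≤ k.castSucc) :
    condExpIncrement μ ℱ k X =ᵐ[μ] 0 := by
  have hk : Dtil k.castSucc (condExpIncrement μ ℱ k X) =ᵐ[μ] 0 := by
    filter_upwards [h, ae_forall_deviation_condExpIncrement_nonneg hDtil hX] with ω h1 h2
    exact (sum_eq_zero_iff_of_nonneg fun k _ => h2 k).1 h1 k (mem_filter.2 ⟨mem_univ _, hik⟩)
  obtain ⟨Y, hY, hXY⟩ := ((hDtil k.castSucc).ae_eq_zero_iff (memLp_condExpIncrement hX)).1 hk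
  exact condExpIncrement_ae_eq_zero_of_aestronglyMeasurable ⟨Y, hY.stronglyMeasurable, hXY⟩

lemma synthesizedSum_add_ae_eq [IsFiniteMeasure μ] (hDtil : ∀ k, IsCondDeviation μ (ℱ k) (Dtil k))
    (hX : MemLp X 2 μ) (hY : MemLp Y 2 μ) (hYi : AEStronglyMeasurable[ℱ i] Y μ) :
    synthesizedSum μ ℱ Dtil i (X + Y) =ᵐ[μ] synthesizedSum μ ℱ Dtil i X := by
  refine eventuallyEq_finsetSum _ fun k hk => (hDtil k.castSucc).congr_ae
    (memLp_condExpIncrement (hX.add hY)) (memLp_condExpIncrement hX) ?_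
  filter_upwards [condExpIncrement_add (ℱ := ℱ) (k := k) (hX.integrable one_le_two)
      (hY.integrable one_le_two),
    condExpIncrement_ae_eq_zero (mem_filter.1 hk).2 hYi (hY.integrable one_le_two)] with ω h1 h2
  rw [h1, Pi.add_apply, h2, Pi.zero_apply, add_zero]

lemma synthesizedSum_convexComb_le [IsFiniteMeasure μ]
    (hDtil : ∀ k, IsCondDeviation μ (ℱ k) (Dtil k)) (hX : MemLp X 2 μ) (hY : MemLp Y 2 μ)
    {lam : Ω → ℝ} (hlam : Measurable[ℱ i] lam) (hlam0 : ∀ ω, 0 ≤ lam ω)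
    (hlam1 : ∀ ω, lam ω ≤ 1) :
    synthesizedSum μ ℱ Dtil i (fun ω => lam ω * X ω + (1 - lam ω) * Y ω) ≤ᵐ[μ]
      fun ω => lam ω * synthesizedSum μ ℱ Dtil i X ω
        + (1 - lam ω) * synthesizedSum μ ℱ Dtil i Y ω := by
  have hlam' : AEStronglyMeasurable lam μ := (hlam.mono (ℱ.le i) le_rfl).aestronglyMeasurable
  have hterm : ∀ k ∈ univ.filter (fun k : Fin n => i ≤ k.castSucc),
      Dtil k.castSucc (condExpIncrement μ ℱ k (fun ω => lam ω * X ω + (1 - lam ω) * Y ω))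
        ≤ᵐ[μ] fun ω => lam ω * Dtil k.castSucc (condExpIncrement μ ℱ k X) ω
          + (1 - lam ω) * Dtil k.castSucc (condExpIncrement μ ℱ k Y) ω := by
    intro k hk
    have hik := (mem_filter.1 hk).2
    have hX' := memLp_condExpIncrement (ℱ := ℱ) (k := k) hX
    have hY' := memLp_condExpIncrement (ℱ := ℱ) (k := k) hY
    refine ((hDtil k.castSucc).congr_ae
      (memLp_condExpIncrement (MemLp.convexComb hlam' hlam0 hlam1 hX hY))
      (MemLp.convexComb hlam' hlam0 hlam1 hX' hY')
      (condExpIncrement_convexComb hik hlam.stronglyMeasurable hlam0 hlam1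
        (hX.integrable one_le_two) (hY.integrable one_le_two))).le.trans ?_
    exact (hDtil k.castSucc).convexComb_le hX' hY' (hlam.mono (ℱ.mono hik) le_rfl) hlam0 hlam1
  filter_upwards [eventuallyLE_finsetSum _ hterm] with ω hω
  simpa only [synthesizedSum, sum_add_distrib, mul_sum] using hω

/- Replacing `X` by `μ[X | ℱ j]` keeps the increments before `j` and kills those after `j`. -/
lemma synthesizedSum_ae_eq_add [IsFiniteMeasure μ] (hDtil : ∀ k, IsCondDeviation μ (ℱ k) (Dtil k))
    (hij : i ≤ j) (hX : MemLp X 2 μ) :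
    synthesizedSum μ ℱ Dtil i X =ᵐ[μ]
      synthesizedSum μ ℱ Dtil i (μ[X | ℱ j]) + synthesizedSum μ ℱ Dtil j X := by
  have hXj : MemLp (μ[X | ℱ j]) 2 μ := hX.condExp one_le_two
  have hterm : ∀ᵐ ω ∂μ, ∀ k : Fin n, Dtil k.castSucc (condExpIncrement μ ℱ k X) ω =
      Dtil k.castSucc (condExpIncrement μ ℱ k (μ[X | ℱ j])) ω
        + if j ≤ k.castSucc then Dtil k.castSucc (condExpIncrement μ ℱ k X) ω else 0 := by
    refine ae_all_iff.2 fun k => ?_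
    by_cases hjk : j ≤ k.castSucc
    · filter_upwards [(hDtil k.castSucc).ae_eq_zero_of_ae_eq_zero (memLp_condExpIncrement hXj)
        (condExpIncrement_ae_eq_zero hjk stronglyMeasurable_condExp.aestronglyMeasurable
          integrable_condExp)] with ω h
      simp [hjk, h]
    · filter_upwards [(hDtil k.castSucc).congr_ae (memLp_condExpIncrement hXj)
        (memLp_condExpIncrement hX)
        (condExpIncrement_condExp_of_succ_le
          (Fin.castSucc_lt_iff_succ_le.1 (not_le.1 hjk)))] with ω h
      simp [hjk, h]
  have hfilter : (univ.filter fun k : Fin n => i ≤ k.castSucc).filter (fun k => j ≤ k.castSucc)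
      = univ.filter fun k : Fin n => j ≤ k.castSucc := by
    rw [filter_filter]
    exact filter_congr fun k _ => and_iff_right_of_imp hij.trans
  filter_upwards [hterm] with ω hω
  simp only [synthesizedSum, Pi.add_apply]
  rw [← hfilter, sum_filter (s := univ.filter _) (p := fun k : Fin n => j ≤ k.castSucc),
    ← sum_add_distrib]
  exact sum_congr rfl fun k _ => hω k

lemma synthesizedDeviation_ae_eq_zero [IsFiniteMeasure μ]
    (hDtil : ∀ k, IsCondDeviation μ (ℱ k) (Dtil k)) (hX : MemLp X 2 μ)
    (hXi : AEStronglyMeasurable[ℱ i] X μ) : synthesizedDeviation μ ℱ Dtil i X =ᵐ[μ] 0 :=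
  (condExp_congr_ae (synthesizedSum_ae_eq_zero hDtil hX hXi)).trans (by rw [condExp_zero])

lemma aestronglyMeasurable_of_synthesizedDeviation_ae_eq_zero [IsFiniteMeasure μ]
    (hlast : ℱ (Fin.last n) = m0) (hDtil : ∀ k, IsCondDeviation μ (ℱ k) (Dtil k))
    (hX : MemLp X 2 μ) (h : synthesizedDeviation μ ℱ Dtil i X =ᵐ[μ] 0) :
    AEStronglyMeasurable[ℱ i] X μ := by
  have hS : synthesizedSum μ ℱ Dtil i X =ᵐ[μ] 0 :=
    ae_eq_zero_of_condExp_ae_eq_zero (ℱ.le i)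
      ((memLp_synthesizedSum hDtil hX).integrable one_le_two) (synthesizedSum_nonneg hDtil hX) h
  have hXi := condExp_ae_eq_of_condExpIncrement_ae_eq_zero
    (fun _ => condExpIncrement_ae_eq_zero_of_synthesizedSum_ae_eq_zero hDtil hX hS) _
    (Fin.le_last i)
  rw [hlast] at hXi
  exact ⟨_, stronglyMeasurable_condExp,
    (condExp_of_aestronglyMeasurable' le_rfl hX.1 (hX.integrable one_le_two)).symm.trans hXi⟩

lemma synthesizedDeviation_convexComb_le [IsFiniteMeasure μ]
    (hDtil : ∀ k, IsCondDeviation μ (ℱ k) (Dtil k)) (hX : MemLp X 2 μ) (hY : MemLp Y 2 μ)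
    {lam : Ω → ℝ} (hlam : Measurable[ℱ i] lam) (hlam0 : ∀ ω, 0 ≤ lam ω)
    (hlam1 : ∀ ω, lam ω ≤ 1) :
    synthesizedDeviation μ ℱ Dtil i (fun ω => lam ω * X ω + (1 - lam ω) * Y ω) ≤ᵐ[μ]
      fun ω => lam ω * synthesizedDeviation μ ℱ Dtil i X ω
        + (1 - lam ω) * synthesizedDeviation μ ℱ Dtil i Y ω := by
  have hlam' : AEStronglyMeasurable lam μ := (hlam.mono (ℱ.le i) le_rfl).aestronglyMeasurable
  have hSX := memLp_synthesizedSum (i := i) hDtil hX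
  have hSY := memLp_synthesizedSum (i := i) hDtil hY
  exact (condExp_mono
    ((memLp_synthesizedSum hDtil (MemLp.convexComb hlam' hlam0 hlam1 hX hY)).integrable one_le_two)
    ((MemLp.convexComb hlam' hlam0 hlam1 hSX hSY).integrable one_le_two)
    (synthesizedSum_convexComb_le hDtil hX hY hlam hlam0 hlam1)).trans
    (condExp_convexComb_ae_eq (ℱ.le i) hlam.stronglyMeasurable hlam0 hlam1
      (hSX.integrable one_le_two) (hSY.integrable one_le_two)).le

lemma isCondDeviation_synthesizedDeviation [IsFiniteMeasure μ] (hlast : ℱ (Fin.last n) = m0)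
    (hDtil : ∀ k, IsCondDeviation μ (ℱ k) (Dtil k)) (i : Fin (n + 1)) :
    IsCondDeviation μ (ℱ i) (synthesizedDeviation μ ℱ Dtil i) := by
  refine ⟨fun X hX => ⟨stronglyMeasurable_condExp,
      (memLp_synthesizedSum hDtil hX).condExp one_le_two⟩,
    synthesizedDeviation_ae_eq_zero hDtil MemLp.zero aestronglyMeasurable_zero, ?_,
    fun X hX => ⟨condExp_nonneg (synthesizedSum_nonneg hDtil hX), fun h => ?_, ?_⟩,
    fun X Y hX hY lam => synthesizedDeviation_convexComb_le hDtil hX hY⟩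
  · rintro X hX c hc ⟨C, hC⟩
    have hcm := (hc.mono (ℱ.le i) le_rfl).aestronglyMeasurable (μ := μ)
    exact condExp_congr_ae (synthesizedSum_add_ae_eq hDtil hX
      (MemLp.of_bound hcm C (.of_forall hC)) hc.aestronglyMeasurable)
  · obtain ⟨Y, hY, hXY⟩ := aestronglyMeasurable_of_synthesizedDeviation_ae_eq_zero hlast hDtil hX h
    exact ⟨Y, hY.measurable, hXY⟩
  · rintro ⟨Y, hY, hXY⟩
    exact synthesizedDeviation_ae_eq_zero hDtil hX ⟨Y, hY.stronglyMeasurable, hXY⟩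

lemma synthesizedDeviation_ae_eq_add [IsFiniteMeasure μ]
    (hDtil : ∀ k, IsCondDeviation μ (ℱ k) (Dtil k)) (hij : i ≤ j) (hX : MemLp X 2 μ) :
    synthesizedDeviation μ ℱ Dtil i X =ᵐ[μ]
      synthesizedDeviation μ ℱ Dtil i (μ[X | ℱ j]) + μ[synthesizedDeviation μ ℱ Dtil j X | ℱ i] :=
  calc synthesizedDeviation μ ℱ Dtil i X
      =ᵐ[μ] μ[synthesizedSum μ ℱ Dtil i (μ[X | ℱ j]) + synthesizedSum μ ℱ Dtil j X | ℱ i] :=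
        condExp_congr_ae (synthesizedSum_ae_eq_add hDtil hij hX)
    _ =ᵐ[μ] synthesizedDeviation μ ℱ Dtil i (μ[X | ℱ j]) + μ[synthesizedSum μ ℱ Dtil j X | ℱ i] :=
        condExp_add ((memLp_synthesizedSum hDtil (hX.condExp one_le_two)).integrable one_le_two)
          ((memLp_synthesizedSum hDtil hX).integrable one_le_two) _
    _ =ᵐ[μ] _ := .add .rfl (condExp_condExp_of_le (ℱ.mono hij) (ℱ.le j)).symm

end SynthesizedDeviation

theorem discrete_synthesis_dynamicDeviation_general {Ω : Type*} {m0 : MeasurableSpace Ω}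
    (μ : Measure Ω) [IsProbabilityMeasure μ] (T : ℝ) (n : ℕ)
    (t : Fin (n + 1) → ℝ) (htmono : StrictMono t) (htn : t (Fin.last n) = T)
    (F : ℝ → MeasurableSpace Ω) (hFmono : Monotone F) (hFle : ∀ s, F s ≤ m0)
    (hFT : F T = m0)
    (Dtil : Fin (n + 1) → (Ω → ℝ) → Ω → ℝ)
    (hDtil : ∀ i, IsCondDeviation μ (F (t i)) (Dtil i))
    (D : Fin (n + 1) → (Ω → ℝ) → Ω → ℝ)
    (hDdef : ∀ i (X : Ω → ℝ), D i X =
      μ[fun ω => ∑ j ∈ Finset.univ.filter (fun j : Fin n => i ≤ j.castSucc),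
          Dtil j.castSucc
            (fun ω' => (μ[X|F (t j.succ)]) ω' - (μ[X|F (t j.castSucc)]) ω') ω
        | F (t i)]) :
    (∀ i, IsCondDeviation μ (F (t i)) (D i)) ∧
    -- (D5) recursive property
    (∀ i j : Fin (n + 1), i ≤ j → ∀ X : Ω → ℝ, MemLp X 2 μ →
      D i X =ᵐ[μ] D i (μ[X|F (t j)]) + μ[D j X|F (t i)]) := by
  let ℱ : Filtration (Fin (n + 1)) m0 :=
    ⟨fun i => F (t i), hFmono.comp htmono.monotone, fun _ => hFle _⟩
  have hlast : ℱ (Fin.last n) = m0 := by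
    change F (t (Fin.last n)) = m0
    rw [htn, hFT]
  obtain rfl : D = synthesizedDeviation μ ℱ Dtil := funext fun i => funext (hDdef i)
  exact ⟨isCondDeviation_synthesizedDeviation hlast hDtil,
    fun _ _ hij _ hX => synthesizedDeviation_ae_eq_add hDtil hij hX⟩

/-- **Discrete-time synthesis of dynamic deviation measures (sufficiency direction of
Proposition 1).**  Let `I = {t_0 < … < t_n} ⊆ [0,T]` with `t_n = T`, `F_T` the ambient
σ-algebra, and let `D̃_{t_i}` be `F_{t_i}`-conditional convex deviation measures.  Then the
family `D_{t_i}(X) = E[ Σ_{j ≥ i} D̃_{t_j}(E[X|F_{t_{j+1}}] − E[X|F_{t_j}]) | F_{t_i} ]`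
satisfies (D1), (D2), (D3) and the recursive property (D5). -/
theorem discrete_synthesis_dynamicDeviation {Ω : Type*} {m0 : MeasurableSpace Ω}
    (μ : Measure Ω) [IsProbabilityMeasure μ] (T : ℝ) (n : ℕ)
    (t : Fin (n + 1) → ℝ) (htmono : StrictMono t) (ht0 : 0 ≤ t 0) (htn : t (Fin.last n) = T)
    (F : ℝ → MeasurableSpace Ω) (hFmono : Monotone F) (hFle : ∀ s, F s ≤ m0)
    (hFT : F T = m0)
    (Dtil : Fin (n + 1) → (Ω → ℝ) → Ω → ℝ)
    (hDtil : ∀ i, IsCondDeviation μ (F (t i)) (Dtil i))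
    (D : Fin (n + 1) → (Ω → ℝ) → Ω → ℝ)
    (hDdef : ∀ i (X : Ω → ℝ), D i X =
      μ[fun ω => ∑ j ∈ Finset.univ.filter (fun j : Fin n => i ≤ j.castSucc),
          Dtil j.castSucc
            (fun ω' => (μ[X|F (t j.succ)]) ω' - (μ[X|F (t j.castSucc)]) ω') ω
        | F (t i)]) :
    (∀ i, IsCondDeviation μ (F (t i)) (D i)) ∧
    -- (D5) recursive property
    (∀ i j : Fin (n + 1), i ≤ j → ∀ X : Ω → ℝ, MemLp X 2 μ →
      D i X =ᵐ[μ] D i (μ[X|F (t j)]) + μ[D j X|F (t i)]) :=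
  discrete_synthesis_dynamicDeviation_general μ T n t htmono htn F hFmono hFle hFT Dtil hDtil D
    hDdef
end

section
/- Discrete-time decomposition of dynamic deviation measures (necessity direction of Proposition 1): let I = {t_0 < t_1 < ... < t_n} ⊆ [0,T] with t_n = T, and let (D_t)_{t∈I} be a family of F_t-conditional convex deviation measures indexed by I satisfying the recursive property (D5): D_t(X) = D_t(E[X|F_s]) + E[D_s(X)|F_t] a.s. for all t, s ∈ I with t ≤ s. Then for every t ∈ I and X ∈ L²(F_T): D_t(X) = E[ Σ_{i : t_i ≥ t, i < n} D_{t_i}( E[X|F_{t_{i+1}}] − E[X|F_{t_i}] ) | F_t ] almost surely. -/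
/-!
Reverse induction on the time index. At `t_n = T` every `X` is `F_T`-measurable, so `D_T`
vanishes by (D2). For `t_i < t_{i+1}`, the recursion (D5) gives
`D_{t_i}(X) = D_{t_i}(E[X|F_{t_{i+1}}]) + E[D_{t_{i+1}}(X)|F_{t_i}]`. Translation invariance
lets one subtract the `F_{t_i}`-measurable `E[X|F_{t_i}]` inside the first term, which is then
`F_{t_i}`-measurable and can be moved under `E[·|F_{t_i}]`; the tower property absorbs the
induction hypothesis into the second term.
-/

open MeasureTheory

namespace IsCondDeviation

variable {Ω : Type*} {m m0 : MeasurableSpace Ω} {μ : Measure Ω} {D : (Ω → ℝ) → Ω → ℝ}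

lemma ae_eq_zero_of_aestronglyMeasurable (hD : IsCondDeviation μ m D) {X : Ω → ℝ}
    (hX : MemLp X 2 μ) (hXm : AEStronglyMeasurable[m] X μ) : D X =ᵐ[μ] 0 :=
  ((hD.2.2.2.1 X hX).2).2 ⟨hXm.mk X, hXm.stronglyMeasurable_mk.measurable, hXm.ae_eq_mk⟩

/-- Conditional convexity with the weight `1_A`, applied in both orders, sandwiches `D X` and
`D Z` on `A`. -/
lemma ae_eq_of_eqOn (hD : IsCondDeviation μ m D) {X Z : Ω → ℝ} (hX : MemLp X 2 μ)
    (hZ : MemLp Z 2 μ) {A : Set Ω} (hA : MeasurableSet[m] A) (hXZ : Set.EqOn X Z A) :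
    ∀ᵐ ω ∂μ, ω ∈ A → D X ω = D Z ω := by
  have convex := hD.2.2.2.2
  set lam : Ω → ℝ := A.indicator 1
  have hlam_meas : Measurable[m] lam := measurable_const.indicator hA
  have hlam_nonneg : ∀ ω, 0 ≤ lam ω := Set.indicator_nonneg fun _ _ => zero_le_one
  have hlam_le_one : ∀ ω, lam ω ≤ 1 := Set.indicator_le_self' fun _ _ => zero_le_one
  have hmix : ∀ Y Y' : Ω → ℝ, Set.EqOn Y Y' A →
      (fun ω => lam ω * Y ω + (1 - lam ω) * Y' ω) = Y' := by
    intro Y Y' hYY'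
    funext ω
    by_cases hω : ω ∈ A
    · simp [lam, hω, hYY' hω]
    · simp [lam, hω]
  have hZX := convex X Z hX hZ lam hlam_meas hlam_nonneg hlam_le_one
  have hXZ' := convex Z X hZ hX lam hlam_meas hlam_nonneg hlam_le_one
  rw [hmix X Z hXZ] at hZX
  rw [hmix Z X hXZ.symm] at hXZ'
  filter_upwards [hZX, hXZ'] with ω h₁ h₂ hω
  simp only [lam, Set.indicator_of_mem hω, Pi.one_apply, sub_self, one_mul, zero_mul,
    add_zero] at h₁ h₂
  linarith

variable [IsFiniteMeasure μ]

lemma integrable (hD : IsCondDeviation μ m D) {X : Ω → ℝ} (hX : MemLp X 2 μ) :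
    Integrable (D X) μ :=
  ((hD.1 X hX).2).integrable one_le_two

/-- (D1) only allows bounded shifts; truncating `c` at level `k` and using locality on
`{|c| ≤ k}` removes the boundedness. -/
lemma sub_ae_eq (hm : m ≤ m0) (hD : IsCondDeviation μ m D) {Y c : Ω → ℝ} (hY : MemLp Y 2 μ)
    (hc : MemLp c 2 μ) (hcm : Measurable[m] c) : D (Y - c) =ᵐ[μ] D Y := by
  have htrunc : ∀ k : ℕ, ∀ᵐ ω ∂μ, |c ω| ≤ k → D (Y - c) ω = D Y ω := by
    intro k
    set A : Set Ω := {ω | |c ω| ≤ k}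
    have hA : MeasurableSet[m] A := (measurable_abs.comp hcm) measurableSet_Iic
    have hck_meas : Measurable[m] (A.indicator c) := hcm.indicator hA
    have hck_bound : ∀ ω, |A.indicator c ω| ≤ k := by
      intro ω
      by_cases hω : ω ∈ A
      · rw [Set.indicator_of_mem hω]
        exact hω
      · simp [hω]
    have hck : MemLp (A.indicator c) 2 μ :=
      MemLp.of_bound (hck_meas.mono hm le_rfl).aestronglyMeasurable k
        (Filter.Eventually.of_forall hck_bound)
    have hshift := hD.2.2.1 (Y - A.indicator c) (hY.sub hck) (A.indicator c) hck_meas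
      ⟨k, hck_bound⟩
    rw [sub_add_cancel] at hshift
    have hloc := hD.ae_eq_of_eqOn (hY.sub hc) (hY.sub hck) hA
      fun ω hω => by simp [Set.indicator_of_mem hω]
    filter_upwards [hloc, hshift] with ω h₁ h₂ hω
    rw [h₁ hω, h₂]
  filter_upwards [ae_all_iff.2 htrunc] with ω h
  obtain ⟨k, hk⟩ := exists_nat_ge |c ω|
  exact h k hk

variable {m' : MeasurableSpace Ω} {D' : (Ω → ℝ) → Ω → ℝ}

theorem ae_eq_condExp_increment_add (hmm' : m ≤ m') (hm' : m' ≤ m0)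
    (hD : IsCondDeviation μ m D) {X S : Ω → ℝ} (hX : MemLp X 2 μ)
    (hrec : D X =ᵐ[μ] D (μ[X|m']) + μ[D' X|m]) (hD' : D' X =ᵐ[μ] μ[S|m'])
    (hS : Integrable S μ) :
    D X =ᵐ[μ] μ[D (μ[X|m'] - μ[X|m]) + S|m] := by
  have hm : m ≤ m0 := hmm'.trans hm'
  have hΔ : MemLp (μ[X|m'] - μ[X|m]) 2 μ := (hX.condExp one_le_two).sub (hX.condExp one_le_two)
  have hfirst : D (μ[X|m']) =ᵐ[μ] D (μ[X|m'] - μ[X|m]) :=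
    (hD.sub_ae_eq hm (hX.condExp one_le_two) (hX.condExp one_le_two)
      stronglyMeasurable_condExp.measurable).symm
  have hsecond : μ[D' X|m] =ᵐ[μ] μ[S|m] :=
    (condExp_congr_ae hD').trans (condExp_condExp_of_le hmm' hm')
  have hsplit : μ[D (μ[X|m'] - μ[X|m]) + S|m] =ᵐ[μ] D (μ[X|m'] - μ[X|m]) + μ[S|m] := by
    have hadd := condExp_add (hD.integrable hΔ) hS m
    rwa [condExp_of_stronglyMeasurable hm (hD.1 _ hΔ).1 (hD.integrable hΔ)] at hadd
  exact hrec.trans ((hfirst.add hsecond).trans hsplit.symm)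

end IsCondDeviation

lemma Fin.sum_filter_castSucc_le_castSucc {M : Type*} [AddCommMonoid M] {n : ℕ} (i : Fin n)
    (f : Fin n → M) :
    ∑ j ∈ Finset.univ.filter (fun j : Fin n => i.castSucc ≤ j.castSucc), f j
      = f i + ∑ j ∈ Finset.univ.filter (fun j : Fin n => i.succ ≤ j.castSucc), f j := by
  have hinsert : Finset.univ.filter (fun j : Fin n => i.castSucc ≤ j.castSucc)
      = insert i (Finset.univ.filter fun j : Fin n => i.succ ≤ j.castSucc) := by
    ext j
    simp only [Finset.mem_filter, Finset.mem_insert, Finset.mem_univ, true_and, Fin.le_def,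
      Fin.val_castSucc, Fin.val_succ, Fin.ext_iff]
    omega
  rw [hinsert, Finset.sum_insert (by simp [Fin.le_def])]

theorem discrete_decomposition_dynamicDeviation_general {Ω : Type*} {m0 : MeasurableSpace Ω}
    (μ : Measure Ω) [IsProbabilityMeasure μ] (T : ℝ) (n : ℕ)
    (t : Fin (n + 1) → ℝ) (htmono : StrictMono t) (htn : t (Fin.last n) = T)
    (F : ℝ → MeasurableSpace Ω) (hFmono : Monotone F) (hFle : ∀ s, F s ≤ m0)
    (hFT : F T = m0)
    (D : Fin (n + 1) → (Ω → ℝ) → Ω → ℝ)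
    (hD : ∀ i, IsCondDeviation μ (F (t i)) (D i))
    -- (D5) recursive property
    (hrec : ∀ i j : Fin (n + 1), i ≤ j → ∀ X : Ω → ℝ, MemLp X 2 μ →
      D i X =ᵐ[μ] D i (μ[X|F (t j)]) + μ[D j X|F (t i)]) :
    ∀ i (X : Ω → ℝ), MemLp X 2 μ →
      D i X =ᵐ[μ]
        μ[fun ω => ∑ j ∈ Finset.univ.filter (fun j : Fin n => i ≤ j.castSucc),
            D j.castSucc
              (fun ω' => (μ[X|F (t j.succ)]) ω' - (μ[X|F (t j.castSucc)]) ω') ω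
          | F (t i)] := by
  intro i X hX
  induction i using Fin.reverseInduction with
  | last =>
    simp only [Finset.filter_false_of_mem fun j _ => not_le.2 (Fin.castSucc_lt_last j),
      Finset.sum_empty]
    rw [← Pi.zero_def, condExp_zero]
    refine (hD _).ae_eq_zero_of_aestronglyMeasurable hX ?_
    rw [htn, hFT]
    exact hX.aestronglyMeasurable
  | cast i ih =>
    have hincrement : ∀ j : Fin n, MemLp (μ[X|F (t j.succ)] - μ[X|F (t j.castSucc)]) 2 μ :=
      fun j => (hX.condExp one_le_two).sub (hX.condExp one_le_two)
    simp_rw [Fin.sum_filter_castSucc_le_castSucc i]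
    exact (hD _).ae_eq_condExp_increment_add (hFmono (htmono.monotone i.castSucc_le_succ))
      (hFle _) hX (hrec _ _ i.castSucc_le_succ X hX) ih
      (integrable_finsetSum _ fun j _ => (hD _).integrable (hincrement j))

/-- **Discrete-time decomposition of dynamic deviation measures (necessity direction of
Proposition 1).**  Let `I = {t_0 < … < t_n} ⊆ [0,T]` with `t_n = T`, `F_T` the ambient
σ-algebra, and let `(D_{t_i})` be `F_{t_i}`-conditional convex deviation measures satisfying
the recursive property (D5).  Then
`D_{t_i}(X) = E[ Σ_{j ≥ i} D_{t_j}(E[X|F_{t_{j+1}}] − E[X|F_{t_j}]) | F_{t_i} ]` a.s. -/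
theorem discrete_decomposition_dynamicDeviation {Ω : Type*} {m0 : MeasurableSpace Ω}
    (μ : Measure Ω) [IsProbabilityMeasure μ] (T : ℝ) (n : ℕ)
    (t : Fin (n + 1) → ℝ) (htmono : StrictMono t) (ht0 : 0 ≤ t 0) (htn : t (Fin.last n) = T)
    (F : ℝ → MeasurableSpace Ω) (hFmono : Monotone F) (hFle : ∀ s, F s ≤ m0)
    (hFT : F T = m0)
    (D : Fin (n + 1) → (Ω → ℝ) → Ω → ℝ)
    (hD : ∀ i, IsCondDeviation μ (F (t i)) (D i))
    -- (D5) recursive property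
    (hrec : ∀ i j : Fin (n + 1), i ≤ j → ∀ X : Ω → ℝ, MemLp X 2 μ →
      D i X =ᵐ[μ] D i (μ[X|F (t j)]) + μ[D j X|F (t i)]) :
    ∀ i (X : Ω → ℝ), MemLp X 2 μ →
      D i X =ᵐ[μ]
        μ[fun ω => ∑ j ∈ Finset.univ.filter (fun j : Fin n => i ≤ j.castSucc),
            D j.castSucc
              (fun ω' => (μ[X|F (t j.succ)]) ω' - (μ[X|F (t j.castSucc)]) ω') ω
          | F (t i)] :=
  discrete_decomposition_dynamicDeviation_general μ T n t htmono htn F hFmono hFle hFT D hD hrec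
end

section
/- Lemma (independence implies constancy): let (D_t)_{t∈[0,T]} be a distribution invariant dynamic deviation measure, let t ∈ [0,T], and suppose some F_t-measurable random variable is uniformly distributed on [0,1] (or t = 0 with F_0 trivial). If Y ∈ L²(F_T) is independent of F_t, then D_t(Y) is almost surely constant and equal to D_0(Y). -/
open MeasureTheory

/-- A dynamic deviation measure on `[0,T]`: a family of conditional convex deviation measures
satisfying (D4) `L²`-continuity and (D5) recursiveness. -/
structure IsDynamicDeviation {Ω : Type*} {m0 : MeasurableSpace Ω} (μ : Measure Ω)
    (F : ℝ → MeasurableSpace Ω) (T : ℝ) (D : ℝ → (Ω → ℝ) → Ω → ℝ) : Prop where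
  cond : ∀ t ∈ Set.Icc (0 : ℝ) T, IsCondDeviation μ (F t) (D t)
  -- (D4) continuity: if `Xₙ → X` in `L²` then `D_t(Xₙ) → D_t(X)` in `L²`
  cont : ∀ t ∈ Set.Icc (0 : ℝ) T, ∀ (X : ℕ → Ω → ℝ) (X₀ : Ω → ℝ),
    (∀ k, MemLp (X k) 2 μ) → MemLp X₀ 2 μ →
    Filter.Tendsto (fun k => eLpNorm (X k - X₀) 2 μ) Filter.atTop (nhds 0) →
    Filter.Tendsto (fun k => eLpNorm (D t (X k) - D t X₀) 2 μ) Filter.atTop (nhds 0)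
  -- (D5) recursiveness
  recur : ∀ t s : ℝ, 0 ≤ t → t ≤ s → s ≤ T → ∀ X : Ω → ℝ, MemLp X 2 μ →
    D t X =ᵐ[μ] D t (μ[X|F s]) + μ[D s X|F t]

/-- Distribution invariance of a dynamic deviation measure: `D_0(X₁) = D_0(X₂)` whenever
`X₁, X₂ ∈ L²` have the same law. -/
def DistInvariant {Ω : Type*} {m0 : MeasurableSpace Ω} (μ : Measure Ω)
    (D : ℝ → (Ω → ℝ) → Ω → ℝ) : Prop :=
  ∀ X₁ X₂ : Ω → ℝ, MemLp X₁ 2 μ → MemLp X₂ 2 μ →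
    μ.map X₁ = μ.map X₂ → D 0 X₁ =ᵐ[μ] D 0 X₂

/-!
Write `Z = D_t(Y)`. For `A ∈ F_t`, locality of `D_t` (a consequence of conditional convexity)
and recursiveness between `0` and `t` give `∫_A Z = E[D_0(1_A Y)] - E[D_0(1_A E[Y])]`, and by
independence the laws of `1_A Y` and `1_A E[Y]` depend on `A` only through `P(A)`. Hence
`∫_A Z` depends only on `P(A)`. A superlevel set `{Z > b}` maximizes `∫_B Z` among the sets `B`
of the same measure, uniquely up to null sets, while a uniform `F_t`-measurable variable yields
two a.s. different `F_t`-sets of any measure in `(0, 1)`. So every superlevel set of `Z` has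
measure `0` or `1`, i.e. `Z` is a.s. a constant `c`, and recursiveness once more gives
`D_0(Y) = D_0(E[Y]) + E[Z] = c`.
-/

open ProbabilityTheory Set Filter

section Independence

variable {Ω β : Type*} {m m0 : MeasurableSpace Ω} {μ : Measure Ω} [MeasurableSpace β]

theorem ProbabilityTheory.Indep.comap_of_ae_eq {Y Y' : Ω → β}
    (hindep : Indep (MeasurableSpace.comap Y inferInstance) m μ) (hYY' : Y =ᵐ[μ] Y') :
    Indep (MeasurableSpace.comap Y' inferInstance) m μ := by
  rw [Indep_iff] at hindep ⊢
  rintro _ B ⟨s, hs, rfl⟩ hB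
  have hpre : Y' ⁻¹' s =ᵐ[μ] Y ⁻¹' s := hYY'.symm.preimage s
  rw [measure_congr hpre, measure_congr (hpre.inter (EventuallyEq.refl _ B))]
  exact hindep _ _ ⟨s, hs, rfl⟩ hB

theorem ProbabilityTheory.Indep.map_indicator_eq [Zero β] [IsProbabilityMeasure μ]
    (hm : m ≤ m0) {Y : Ω → β} (hY : Measurable Y)
    (hindep : Indep (MeasurableSpace.comap Y inferInstance) m μ) {A B : Set Ω}
    (hA : MeasurableSet[m] A) (hB : MeasurableSet[m] B) (hAB : μ A = μ B) :
    μ.map (A.indicator Y) = μ.map (B.indicator Y) := by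
  have hlaw : ∀ C, MeasurableSet[m] C → ∀ s, MeasurableSet s →
      μ (C.indicator Y ⁻¹' s) = μ (Y ⁻¹' s) * μ C + μ ((0 : Ω → β) ⁻¹' s) * μ Cᶜ := by
    intro C hC s hs
    rw [indicator_preimage, Set.ite,
      measure_union (disjoint_sdiff_right.mono_left inter_subset_right)
        ((measurable_zero hs).diff (hm _ hC)),
      (Indep_iff _ _ μ).1 hindep _ _ ⟨s, hs, rfl⟩ hC, sdiff_eq]
    by_cases h0 : (0 : β) ∈ s <;> simp [Pi.zero_def, h0]
  have hABc : μ Aᶜ = μ Bᶜ := by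
    rw [prob_compl_eq_one_sub (hm _ hA), prob_compl_eq_one_sub (hm _ hB), hAB]
  refine Measure.ext fun s hs => ?_
  rw [Measure.map_apply (hY.indicator (hm _ hA)) hs, Measure.map_apply (hY.indicator (hm _ hB)) hs,
    hlaw A hA s hs, hlaw B hB s hs, hAB, hABc]

theorem ProbabilityTheory.Indep.condExp_indicator [IsFiniteMeasure μ] (hm : m ≤ m0)
    {Y : Ω → ℝ} (hYm : Measurable Y) (hY : Integrable Y μ)
    (hindep : Indep (MeasurableSpace.comap Y inferInstance) m μ) {A : Set Ω}
    (hA : MeasurableSet[m] A) :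
    μ[A.indicator Y | m] =ᵐ[μ] A.indicator fun _ => μ[Y] := by
  refine (MeasureTheory.condExp_indicator hY hA).trans ?_
  filter_upwards [condExp_indep_eq hYm.comap_le hm (comap_measurable Y).stronglyMeasurable hindep]
    with ω hω
  by_cases hωA : ω ∈ A <;> simp [hωA, hω]

end Independence

section ZeroOne

variable {Ω : Type*} {m m0 : MeasurableSpace Ω} {μ : Measure Ω}

theorem ae_eq_setOf_lt_of_setIntegral_eq [IsFiniteMeasure μ] {Z : Ω → ℝ} (hZm : Measurable Z)
    (hZ : Integrable Z μ) {b : ℝ} {B : Set Ω} (hB : MeasurableSet B)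
    (hμB : μ B = μ {ω | b < Z ω})
    (hint : ∫ ω in B, Z ω ∂μ = ∫ ω in {ω | b < Z ω}, Z ω ∂μ) :
    B =ᵐ[μ] {ω | b < Z ω} := by
  set A := {ω | b < Z ω}
  have hA : MeasurableSet A := measurableSet_lt measurable_const hZm
  have hZb : Integrable (fun ω => Z ω - b) μ := hZ.sub (integrable_const b)
  -- `g ≥ 0` because `Z - b` is positive on `A` and nonpositive off `A`
  set g := A.indicator (fun ω => Z ω - b) - B.indicator (fun ω => Z ω - b)
  have hg : 0 ≤ g := fun ω => by
    by_cases hωA : b < Z ω <;> by_cases hωB : ω ∈ B <;>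
      simp [g, A, indicator, hωA, hωB] <;> linarith
  have hg0 : ∫ ω, g ω ∂μ = 0 := by
    have hsetInt : ∀ S, MeasurableSet S →
        ∫ ω in S, (Z ω - b) ∂μ = ∫ ω in S, Z ω ∂μ - μ.real S * b := fun S _ => by
      rw [integral_sub hZ.integrableOn (integrable_const b).integrableOn, setIntegral_const,
        smul_eq_mul]
    rw [integral_sub' (hZb.indicator hA) (hZb.indicator hB), integral_indicator hA,
      integral_indicator hB, hsetInt A hA, hsetInt B hB, hint, measureReal_def, measureReal_def,
      hμB, sub_self]
  have hAB : μ (A \ B) = 0 := by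
    have hg_ae := (integral_eq_zero_iff_of_nonneg hg
      ((hZb.indicator hA).sub (hZb.indicator hB))).1 hg0
    refine measure_mono_null (fun ω hω => ?_) (ae_iff.1 hg_ae)
    have hb : b < Z ω := hω.1
    simp [g, indicator_of_mem hω.1, indicator_of_notMem hω.2]
    linarith
  refine ae_eq_set.2 ⟨?_, hAB⟩
  have h1 := measure_sdiff_add_inter (μ := μ) B hA
  rw [hμB, ← measure_sdiff_add_inter A hB, hAB, zero_add, inter_comm] at h1
  simpa [measure_ne_top] using h1

theorem exists_measure_eq_not_ae_eq_of_uniform [IsProbabilityMeasure μ] (hm : m ≤ m0)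
    {U : Ω → ℝ} (hU : Measurable[m] U)
    (hUlaw : ∀ r ∈ Icc (0 : ℝ) 1, μ {ω | U ω ≤ r} = ENNReal.ofReal r)
    {A : Set Ω} (hA0 : μ A ≠ 0) (hA1 : μ A ≠ 1) :
    ∃ B, MeasurableSet[m] B ∧ μ B = μ A ∧ ¬ B =ᵐ[μ] A := by
  set p := μ.real A
  have hp0 : 0 < p := ENNReal.toReal_pos hA0 (measure_ne_top μ A)
  have hp1 : p < 1 := by
    simpa [p, measureReal_def] using
      ENNReal.toReal_strict_mono ENNReal.one_ne_top (prob_le_one.lt_of_ne hA1)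
  have hpA : ENNReal.ofReal p = μ A := ofReal_measureReal (measure_ne_top μ A)
  have hlow : MeasurableSet[m] {ω | U ω ≤ p} := measurableSet_le hU measurable_const
  have hhigh : MeasurableSet[m] {ω | U ω ≤ 1 - p}ᶜ := (measurableSet_le hU measurable_const).compl
  by_contra! h
  -- `{U ≤ p}` and `{U > 1 - p}` both have measure `p`, but their difference is `{U ≤ min p (1-p)}`
  have hlowA := h _ hlow (by rw [hUlaw p ⟨hp0.le, hp1.le⟩, hpA])
  have hhighA := h _ hhigh (by
    rw [prob_compl_eq_one_sub (hm _ (measurableSet_le hU measurable_const)),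
      hUlaw (1 - p) ⟨by linarith, by linarith⟩, ← hpA, ← ENNReal.ofReal_one,
      ← ENNReal.ofReal_sub _ (by linarith), sub_sub_cancel])
  have hdiff : {ω | U ω ≤ p} \ {ω | U ω ≤ 1 - p}ᶜ = {ω | U ω ≤ min p (1 - p)} := by
    ext ω; simp
  have hnull := (ae_eq_set.1 (hlowA.trans hhighA.symm)).1
  rw [hdiff, hUlaw _ ⟨le_min hp0.le (by linarith), min_le_of_left_le hp1.le⟩,
    ENNReal.ofReal_eq_zero] at hnull
  exact hnull.not_gt (lt_min hp0 (by linarith))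

theorem exists_ae_eq_const_of_setIntegral_eq [IsProbabilityMeasure μ] (hm : m ≤ m0)
    {Z : Ω → ℝ} (hZm : Measurable[m] Z) (hZ : Integrable Z μ)
    (hZint : ∀ A B, MeasurableSet[m] A → MeasurableSet[m] B → μ A = μ B →
      ∫ ω in A, Z ω ∂μ = ∫ ω in B, Z ω ∂μ)
    (hsplit : ∀ A, MeasurableSet[m] A → μ A ≠ 0 → μ A ≠ 1 →
      ∃ B, MeasurableSet[m] B ∧ μ B = μ A ∧ ¬ B =ᵐ[μ] A) :
    ∃ c, Z =ᵐ[μ] fun _ => c := by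
  refine exists_eventuallyEq_const_of_forall_separating (· ∈ range (Ioi : ℝ → Set ℝ)) ?_
  rintro _ ⟨b, rfl⟩
  have hA : MeasurableSet[m] {ω | b < Z ω} := measurableSet_lt measurable_const hZm
  by_cases h0 : μ {ω | b < Z ω} = 0
  · exact .inr (measure_eq_zero_iff_ae_notMem.1 h0)
  by_cases h1 : μ {ω | b < Z ω} = 1
  · exact .inl ((ae_iff_measure_eq (hm _ hA).nullMeasurableSet).2 (by rwa [measure_univ]))
  obtain ⟨B, hB, hμB, hne⟩ := hsplit _ hA h0 h1
  exact absurd (ae_eq_setOf_lt_of_setIntegral_eq (hZm.mono hm le_rfl) hZ (hm _ hB) hμB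
    (hZint _ _ hB hA hμB)) hne

end ZeroOne

namespace IsCondDeviation

variable {Ω : Type*} {m m0 : MeasurableSpace Ω} {μ : Measure Ω} {D : (Ω → ℝ) → Ω → ℝ}

theorem apply_const (hD : IsCondDeviation μ m D) (c : ℝ) : D (fun _ => c) =ᵐ[μ] 0 := by
  obtain ⟨-, hD0, htrans, -⟩ := hD
  simpa using (htrans 0 MemLp.zero (fun _ => c) measurable_const ⟨|c|, fun _ => le_rfl⟩).trans hD0

theorem apply_indicator (hD : IsCondDeviation μ m D) (hm : m ≤ m0) {X : Ω → ℝ}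
    (hX : MemLp X 2 μ) {A : Set Ω} (hA : MeasurableSet[m] A) :
    D (A.indicator X) =ᵐ[μ] A.indicator (D X) := by
  obtain ⟨-, hD0, -, hpos, hconv⟩ := hD
  set lam : Ω → ℝ := A.indicator 1
  have hlam : Measurable[m] lam := measurable_const.indicator hA
  have hlam0 : ∀ ω, 0 ≤ lam ω := fun ω => by by_cases hω : ω ∈ A <;> simp [lam, hω]
  have hlam1 : ∀ ω, lam ω ≤ 1 := fun ω => by by_cases hω : ω ∈ A <;> simp [lam, hω]
  have hAX : MemLp (A.indicator X) 2 μ := hX.indicator (hm _ hA)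
  -- convexity between `X` and `0` gives `D (1_A X) ≤ 1_A D X`; between `1_A X` and `X` the
  -- reverse inequality on `A`
  have hle := hconv X 0 hX MemLp.zero lam hlam hlam0 hlam1
  have hge := hconv (A.indicator X) X hAX hX lam hlam hlam0 hlam1
  have hcomb₁ : (fun ω => lam ω * X ω + (1 - lam ω) * (0 : Ω → ℝ) ω) = A.indicator X := by
    ext ω; by_cases hω : ω ∈ A <;> simp [lam, hω]
  have hcomb₂ : (fun ω => lam ω * A.indicator X ω + (1 - lam ω) * X ω) = X := by
    ext ω; by_cases hω : ω ∈ A <;> simp [lam, hω]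
  rw [hcomb₁] at hle
  rw [hcomb₂] at hge
  filter_upwards [hle, hge, (hpos _ hAX).1, hD0] with ω hle hge hpos hD0
  by_cases hω : ω ∈ A <;> simp_all [lam] <;> linarith

end IsCondDeviation

namespace IsDynamicDeviation

variable {Ω : Type*} {m0 : MeasurableSpace Ω} {μ : Measure Ω} {F : ℝ → MeasurableSpace Ω} {T : ℝ}
  {D : ℝ → (Ω → ℝ) → Ω → ℝ}

theorem congr_ae (hD : IsDynamicDeviation μ F T D) {s : ℝ} (hs : s ∈ Icc 0 T)
    {X X' : Ω → ℝ} (hX : MemLp X 2 μ) (hX' : MemLp X' 2 μ) (hXX' : X =ᵐ[μ] X') :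
    D s X =ᵐ[μ] D s X' := by
  have hdist : eLpNorm (X - X') 2 μ = 0 := by
    rw [eLpNorm_congr_ae ((sub_ae_eq_zero _ _).2 hXX'), eLpNorm_zero]
  have hlim := hD.cont s hs (fun _ => X) X' (fun _ => hX) hX' (by simp [hdist])
  rw [tendsto_const_nhds_iff, eLpNorm_eq_zero_iff (((hD.cond s hs).1 X hX).2.1.sub
    ((hD.cond s hs).1 X' hX').2.1) two_ne_zero] at hlim
  exact (sub_ae_eq_zero _ _).1 hlim

theorem recur_of_condExp_ae_eq (hD : IsDynamicDeviation μ F T D) {t s : ℝ} (ht : 0 ≤ t)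
    (hts : t ≤ s) (hsT : s ≤ T) {X X' : Ω → ℝ} (hX : MemLp X 2 μ) (hX' : MemLp X' 2 μ)
    (hXX' : μ[X | F s] =ᵐ[μ] X') :
    D t X =ᵐ[μ] D t X' + μ[D s X | F t] :=
  (hD.recur t s ht hts hsT X hX).trans <|
    (hD.congr_ae ⟨ht, hts.trans hsT⟩ (hX'.ae_eq hXX'.symm) hX' hXX').add EventuallyEq.rfl

variable [IsProbabilityMeasure μ] {t : ℝ} {Y : Ω → ℝ}

theorem setIntegral_eq_sub_of_indep (hD : IsDynamicDeviation μ F T D) (hFle : ∀ s, F s ≤ m0)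
    (ht : t ∈ Icc 0 T) (hYm : Measurable Y) (hY : MemLp Y 2 μ)
    (hindep : Indep (MeasurableSpace.comap Y inferInstance) (F t) μ) {A : Set Ω}
    (hA : MeasurableSet[F t] A) :
    ∫ ω in A, D t Y ω ∂μ =
      ∫ ω, D 0 (A.indicator Y) ω ∂μ - ∫ ω, D 0 (A.indicator fun _ => μ[Y]) ω ∂μ := by
  have h0 : (0 : ℝ) ∈ Icc 0 T := ⟨le_rfl, ht.1.trans ht.2⟩
  have hA' : MeasurableSet A := hFle t _ hA
  have hmean : MemLp (A.indicator fun _ => μ[Y]) 2 μ := (memLp_const _).indicator hA'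
  have hrec := hD.recur_of_condExp_ae_eq le_rfl ht.1 ht.2 (hY.indicator hA') hmean
    (hindep.condExp_indicator (hFle t) hYm (hY.integrable one_le_two) hA)
  have hlast : ∫ ω, μ[D t (A.indicator Y) | F 0] ω ∂μ = ∫ ω in A, D t Y ω ∂μ := by
    rw [integral_condExp (hFle 0),
      integral_congr_ae ((hD.cond t ht).apply_indicator (hFle t) hY hA), integral_indicator hA']
  rw [integral_congr_ae hrec, integral_add' (((hD.cond 0 h0).1 _ hmean).2.integrable one_le_two)
    integrable_condExp, hlast]
  ring

theorem setIntegral_eq_of_measure_eq (hD : IsDynamicDeviation μ F T D) (hFle : ∀ s, F s ≤ m0)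
    (hinv : DistInvariant μ D) (ht : t ∈ Icc 0 T) (hYm : Measurable Y) (hY : MemLp Y 2 μ)
    (hindep : Indep (MeasurableSpace.comap Y inferInstance) (F t) μ) {A B : Set Ω}
    (hA : MeasurableSet[F t] A) (hB : MeasurableSet[F t] B) (hAB : μ A = μ B) :
    ∫ ω in A, D t Y ω ∂μ = ∫ ω in B, D t Y ω ∂μ := by
  have hmean : Indep (MeasurableSpace.comap (fun _ : Ω => μ[Y]) inferInstance) (F t) μ := by
    rw [MeasurableSpace.comap_const]
    exact indep_bot_left _
  rw [hD.setIntegral_eq_sub_of_indep hFle ht hYm hY hindep hA,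
    hD.setIntegral_eq_sub_of_indep hFle ht hYm hY hindep hB,
    integral_congr_ae (hinv _ _ (hY.indicator (hFle t _ hA)) (hY.indicator (hFle t _ hB))
      (hindep.map_indicator_eq (hFle t) hYm hA hB hAB)),
    integral_congr_ae (hinv _ _ ((memLp_const _).indicator (hFle t _ hA))
      ((memLp_const _).indicator (hFle t _ hB))
      (hmean.map_indicator_eq (hFle t) measurable_const hA hB hAB))]

end IsDynamicDeviation

theorem distInvariant_indep_const_general {Ω : Type*} {m0 : MeasurableSpace Ω}
    (μ : Measure Ω) [IsProbabilityMeasure μ] (T : ℝ)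
    (F : ℝ → MeasurableSpace Ω) (hFle : ∀ s, F s ≤ m0)
    (D : ℝ → (Ω → ℝ) → Ω → ℝ)
    (hD : IsDynamicDeviation μ F T D) (hinv : DistInvariant μ D)
    (t : ℝ) (ht : t ∈ Set.Icc (0 : ℝ) T)
    (hrich : (∃ U : Ω → ℝ, Measurable[F t] U ∧
        ∀ r ∈ Set.Icc (0 : ℝ) 1, μ {ω | U ω ≤ r} = ENNReal.ofReal r) ∨
      (t = 0 ∧ F 0 = ⊥))
    (Y : Ω → ℝ) (hY : MemLp Y 2 μ)
    (hindep : ProbabilityTheory.Indep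
      (MeasurableSpace.comap Y inferInstance) (F t) μ) :
    ∃ c : ℝ, D t Y =ᵐ[μ] (fun _ => c) ∧ D 0 Y =ᵐ[μ] (fun _ => c) := by
  have h0 : (0 : ℝ) ∈ Icc 0 T := ⟨le_rfl, ht.1.trans ht.2⟩
  wlog hYm : Measurable Y generalizing Y with H
  · have hYY' := hY.1.ae_eq_mk
    have hY' := hY.ae_eq hYY'
    obtain ⟨c, hct, hc0⟩ :=
      H _ hY' (hindep.comap_of_ae_eq hYY') hY.1.stronglyMeasurable_mk.measurable
    exact ⟨c, (hD.congr_ae ht hY hY' hYY').trans hct, (hD.congr_ae h0 hY hY' hYY').trans hc0⟩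
  have hsplit : ∀ A, MeasurableSet[F t] A → μ A ≠ 0 → μ A ≠ 1 →
      ∃ B, MeasurableSet[F t] B ∧ μ B = μ A ∧ ¬ B =ᵐ[μ] A := by
    rcases hrich with ⟨U, hU, hUlaw⟩ | ⟨rfl, hbot⟩
    · exact fun A _ => exists_measure_eq_not_ae_eq_of_uniform (hFle t) hU hUlaw
    · intro A hA
      rw [hbot] at hA
      rcases MeasurableSpace.measurableSet_bot_iff.1 hA with rfl | rfl <;> simp
  obtain ⟨hZm, hZ⟩ := (hD.cond t ht).1 Y hY
  obtain ⟨c, hc⟩ := exists_ae_eq_const_of_setIntegral_eq (hFle t) hZm.measurable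
    (hZ.integrable one_le_two)
    (fun A B hA hB hAB => hD.setIntegral_eq_of_measure_eq hFle hinv ht hYm hY hindep hA hB hAB)
    hsplit
  have hmean : μ[Y | F t] =ᵐ[μ] fun _ => μ[Y] :=
    condExp_indep_eq hYm.comap_le (hFle t) (comap_measurable Y).stronglyMeasurable hindep
  refine ⟨c, hc, ?_⟩
  calc D 0 Y =ᵐ[μ] D 0 (fun _ => μ[Y]) + μ[D t Y | F 0] :=
        hD.recur_of_condExp_ae_eq le_rfl ht.1 ht.2 hY (memLp_const _) hmean
    _ =ᵐ[μ] 0 + fun _ => c :=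
        ((hD.cond 0 h0).apply_const _).add
          ((condExp_congr_ae hc).trans (.of_eq (condExp_const (hFle 0) c)))
    _ = fun _ => c := zero_add _

/-- **Independence implies constancy (Lemma 1).**  Let `(D_t)` be a distribution invariant
dynamic deviation measure, `t ∈ [0,T]`, and suppose some `F_t`-measurable random variable is
uniformly distributed on `[0,1]` (or `t = 0` with `F_0` trivial).  If `Y ∈ L²` is independent
of `F_t`, then `D_t(Y)` is a.s. constant and equal to `D_0(Y)`. -/
theorem distInvariant_indep_const {Ω : Type*} {m0 : MeasurableSpace Ω}
    (μ : Measure Ω) [IsProbabilityMeasure μ] (T : ℝ) (hT : 0 < T)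
    (F : ℝ → MeasurableSpace Ω) (hFmono : Monotone F) (hFle : ∀ s, F s ≤ m0)
    (hFT : F T = m0)
    (D : ℝ → (Ω → ℝ) → Ω → ℝ)
    (hD : IsDynamicDeviation μ F T D) (hinv : DistInvariant μ D)
    (t : ℝ) (ht : t ∈ Set.Icc (0 : ℝ) T)
    (hrich : (∃ U : Ω → ℝ, Measurable[F t] U ∧
        ∀ r ∈ Set.Icc (0 : ℝ) 1, μ {ω | U ω ≤ r} = ENNReal.ofReal r) ∨
      (t = 0 ∧ F 0 = ⊥))
    (Y : Ω → ℝ) (hY : MemLp Y 2 μ)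
    (hindep : ProbabilityTheory.Indep
      (MeasurableSpace.comap Y inferInstance) (F t) μ) :
    ∃ c : ℝ, D t Y =ᵐ[μ] (fun _ => c) ∧ D 0 Y =ᵐ[μ] (fun _ => c) :=
  distInvariant_indep_const_general μ T F hFle D hD hinv t ht hrich Y hY hindep
end

section
/- Reduction of the risk-sharing problem to an inf-convolution: let D^A, D^B : L² → ℝ be nonnegative maps that are translation invariant (D^i(X + c) = D^i(X) for every X ∈ L² and constant c ∈ ℝ), and set U^i(X) = E[X] − D^i(X). Fix X_A, X_B ∈ L², and for each Y' ∈ L² define the price π_{Y'} = E[Y'] − D^B(X_B + Y') + D^B(X_B), which is the unique price satisfying the participation constraint U^B(Y' − π_{Y'} + X_B) = U^B(X_B). Then for every Y' ∈ L², U^A(X_A − (Y' − π_{Y'})) = E[X_A] + D^B(X_B) − [ D^A(X_A − Y') + D^B(X_B + Y') ]; consequently Y'* maximizes Y' ↦ U^A(X_A − (Y' − π_{Y'})) over L² if and only if Y* := Y'* + X_B minimizes Y ↦ D^A(X_A + X_B − Y) + D^B(Y) over L². -/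
open MeasureTheory

/-- The mean-deviation utility `U(X) = E[X] − D(X)` associated with a deviation measure `D`. -/
noncomputable def devUtility {Ω : Type*} [MeasurableSpace Ω] (μ : Measure Ω)
    (D : (Ω → ℝ) → ℝ) (X : Ω → ℝ) : ℝ :=
  (∫ ω, X ω ∂μ) - D X

/-- The price `π_{Y'} = E[Y'] − D^B(X_B + Y') + D^B(X_B)` at which agent `B` is willing to
exchange the payoff `Y'`. -/
noncomputable def devPrice {Ω : Type*} [MeasurableSpace Ω] (μ : Measure Ω)
    (DB : (Ω → ℝ) → ℝ) (XB Y' : Ω → ℝ) : ℝ :=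
  (∫ ω, Y' ω ∂μ) - DB (fun ω => XB ω + Y' ω) + DB XB

/-! Translation invariance makes `U(X + c) = U(X) + c`, so `U^B(X_B + Y' - p) = U^B(X_B)` is
linear in `p` with the single root `π_{Y'} = U^B(X_B + Y') - U^B(X_B)`. Agent `A`'s objective then
equals a constant minus `D^A(X_A - Y') + D^B(X_B + Y')`, and the substitution `Y = Y' + X_B`, a
bijection of `L²`, turns its maximization into the inf-convolution problem. -/

section DevUtility

variable {Ω : Type*} [MeasurableSpace Ω] {μ : Measure Ω}

theorem devUtility_add_const [IsProbabilityMeasure μ] {D : (Ω → ℝ) → ℝ} {X : Ω → ℝ}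
    (hX : Integrable X μ) (c : ℝ) (hD : D (fun ω => X ω + c) = D X) :
    devUtility μ D (fun ω => X ω + c) = devUtility μ D X + c := by
  rw [devUtility, devUtility, hD, integral_add hX (integrable_const c), integral_const,
    probReal_univ, one_smul]
  ring

theorem devPrice_eq_devUtility_sub {D : (Ω → ℝ) → ℝ} {XB Y' : Ω → ℝ}
    (hXB : Integrable XB μ) (hY' : Integrable Y' μ) :
    devPrice μ D XB Y' = devUtility μ D (fun ω => XB ω + Y' ω) - devUtility μ D XB := by
  rw [devPrice, devUtility, devUtility, integral_add hXB hY']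
  ring

theorem devUtility_sub_add_eq_iff [IsProbabilityMeasure μ] {D : (Ω → ℝ) → ℝ}
    {XB Y' : Ω → ℝ} (hXB : Integrable XB μ) (hY' : Integrable Y' μ)
    (hD : ∀ c : ℝ, D (fun ω => XB ω + Y' ω + c) = D fun ω => XB ω + Y' ω) (p : ℝ) :
    devUtility μ D (fun ω => Y' ω - p + XB ω) = devUtility μ D XB ↔
      p = devPrice μ D XB Y' := by
  have hshift : (fun ω => Y' ω - p + XB ω) = fun ω => XB ω + Y' ω + -p := by
    funext ω; ring
  rw [hshift, devUtility_add_const (X := fun ω => XB ω + Y' ω) (hXB.add hY') _ (hD _),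
    devPrice_eq_devUtility_sub hXB hY']
  constructor <;> intro h <;> linarith

theorem devUtility_sub_sub_devPrice [IsProbabilityMeasure μ] {DA DB : (Ω → ℝ) → ℝ}
    {XA XB Y' : Ω → ℝ} (hXA : Integrable XA μ) (hY' : Integrable Y' μ)
    (hDA : ∀ c : ℝ, DA (fun ω => XA ω - Y' ω + c) = DA fun ω => XA ω - Y' ω) :
    devUtility μ DA (fun ω => XA ω - (Y' ω - devPrice μ DB XB Y')) =
      (∫ ω, XA ω ∂μ) + DB XB -
        (DA (fun ω => XA ω - Y' ω) + DB (fun ω => XB ω + Y' ω)) := by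
  have hshift : (fun ω => XA ω - (Y' ω - devPrice μ DB XB Y')) =
      fun ω => XA ω - Y' ω + devPrice μ DB XB Y' := by
    funext ω; ring
  rw [hshift, devUtility_add_const (X := fun ω => XA ω - Y' ω) (hXA.sub hY') _ (hDA _),
    devUtility, devPrice, integral_sub hXA hY']
  ring

end DevUtility

theorem forall_memLp_le_iff_of_eq_sub_shift {Ω : Type*} [MeasurableSpace Ω] {μ : Measure Ω}
    {p : ENNReal} {f g : (Ω → ℝ) → ℝ} {a y : Ω → ℝ} (C : ℝ) (ha : MemLp a p μ)
    (hf : ∀ Y', MemLp Y' p μ → f Y' = C - g (Y' + a)) (hy : MemLp y p μ) :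
    (∀ Y', MemLp Y' p μ → f Y' ≤ f y) ↔ ∀ Y, MemLp Y p μ → g (y + a) ≤ g Y := by
  rw [hf y hy]
  constructor
  · intro hmax Y hY
    have h := hmax (Y - a) (hY.sub ha)
    rw [hf _ (hY.sub ha), sub_add_cancel] at h
    linarith
  · intro hmin Y' hY'
    rw [hf Y' hY']
    linarith [hmin _ (hY'.add ha)]

theorem risk_sharing_reduces_to_infConvolution_general {Ω : Type*} [MeasurableSpace Ω]
    (μ : Measure Ω) [IsProbabilityMeasure μ]
    (DA DB : (Ω → ℝ) → ℝ)
    (hDAtrans : ∀ X : Ω → ℝ, MemLp X 2 μ → ∀ c : ℝ, DA (fun ω => X ω + c) = DA X)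
    (hDBtrans : ∀ X : Ω → ℝ, MemLp X 2 μ → ∀ c : ℝ, DB (fun ω => X ω + c) = DB X)
    (XA XB : Ω → ℝ) (hXA : MemLp XA 2 μ) (hXB : MemLp XB 2 μ) :
    (∀ Y' : Ω → ℝ, MemLp Y' 2 μ →
      -- the price satisfies the participation constraint, and is the unique such price
      devUtility μ DB (fun ω => Y' ω - devPrice μ DB XB Y' + XB ω) = devUtility μ DB XB ∧
      (∀ p : ℝ,
        devUtility μ DB (fun ω => Y' ω - p + XB ω) = devUtility μ DB XB →
        p = devPrice μ DB XB Y') ∧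
      -- the value of agent A's objective
      devUtility μ DA (fun ω => XA ω - (Y' ω - devPrice μ DB XB Y')) =
        (∫ ω, XA ω ∂μ) + DB XB -
          (DA (fun ω => XA ω - Y' ω) + DB (fun ω => XB ω + Y' ω))) ∧
    -- consequence: maximizers correspond to minimizers of the inf-convolution problem
    (∀ Y'star : Ω → ℝ, MemLp Y'star 2 μ →
      ((∀ Y' : Ω → ℝ, MemLp Y' 2 μ →
          devUtility μ DA (fun ω => XA ω - (Y' ω - devPrice μ DB XB Y')) ≤
            devUtility μ DA (fun ω => XA ω - (Y'star ω - devPrice μ DB XB Y'star))) ↔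
        (∀ Y : Ω → ℝ, MemLp Y 2 μ →
          DA (fun ω => XA ω + XB ω - (Y'star ω + XB ω)) +
              DB (fun ω => Y'star ω + XB ω) ≤
            DA (fun ω => XA ω + XB ω - Y ω) + DB Y))) := by
  have hprice (Y' : Ω → ℝ) (hY' : MemLp Y' 2 μ) :=
    devUtility_sub_add_eq_iff (hXB.integrable one_le_two) (hY'.integrable one_le_two)
      (hDBtrans _ (hXB.add hY'))
  have hvalue (Y' : Ω → ℝ) (hY' : MemLp Y' 2 μ) :=
    devUtility_sub_sub_devPrice (DB := DB) (XB := XB) (hXA.integrable one_le_two)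
      (hY'.integrable one_le_two) (hDAtrans _ (hXA.sub hY'))
  refine ⟨fun Y' hY' => ⟨(hprice Y' hY' _).2 rfl, fun p => (hprice Y' hY' p).1,
    hvalue Y' hY'⟩, fun Y'star hstar => ?_⟩
  refine forall_memLp_le_iff_of_eq_sub_shift ((∫ ω, XA ω ∂μ) + DB XB) hXB
    (g := fun Y => DA (fun ω => XA ω + XB ω - Y ω) + DB Y) (fun Y' hY' => ?_) hstar
  rw [hvalue Y' hY']
  congr 3 <;> funext ω <;> simp only [Pi.add_apply] <;> ring

/-- **Reduction of the risk-sharing problem to an inf-convolution.**  Let `D^A, D^B : L² → ℝ`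
be nonnegative and translation invariant, `U^i(X) = E[X] − D^i(X)`, and
`π_{Y'} = E[Y'] − D^B(X_B + Y') + D^B(X_B)`.  Then `π_{Y'}` is the unique price with
`U^B(Y' − π_{Y'} + X_B) = U^B(X_B)`; moreover
`U^A(X_A − (Y' − π_{Y'})) = E[X_A] + D^B(X_B) − [D^A(X_A − Y') + D^B(X_B + Y')]`, and `Y'*`
maximizes `Y' ↦ U^A(X_A − (Y' − π_{Y'}))` over `L²` iff `Y* = Y'* + X_B` minimizes
`Y ↦ D^A(X_A + X_B − Y) + D^B(Y)` over `L²`. -/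
theorem risk_sharing_reduces_to_infConvolution {Ω : Type*} [MeasurableSpace Ω]
    (μ : Measure Ω) [IsProbabilityMeasure μ]
    (DA DB : (Ω → ℝ) → ℝ)
    (hDApos : ∀ X : Ω → ℝ, MemLp X 2 μ → 0 ≤ DA X)
    (hDBpos : ∀ X : Ω → ℝ, MemLp X 2 μ → 0 ≤ DB X)
    (hDAtrans : ∀ X : Ω → ℝ, MemLp X 2 μ → ∀ c : ℝ, DA (fun ω => X ω + c) = DA X)
    (hDBtrans : ∀ X : Ω → ℝ, MemLp X 2 μ → ∀ c : ℝ, DB (fun ω => X ω + c) = DB X)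
    (XA XB : Ω → ℝ) (hXA : MemLp XA 2 μ) (hXB : MemLp XB 2 μ) :
    (∀ Y' : Ω → ℝ, MemLp Y' 2 μ →
      -- the price satisfies the participation constraint, and is the unique such price
      devUtility μ DB (fun ω => Y' ω - devPrice μ DB XB Y' + XB ω) = devUtility μ DB XB ∧
      (∀ p : ℝ,
        devUtility μ DB (fun ω => Y' ω - p + XB ω) = devUtility μ DB XB →
        p = devPrice μ DB XB Y') ∧
      -- the value of agent A's objective
      devUtility μ DA (fun ω => XA ω - (Y' ω - devPrice μ DB XB Y')) =
        (∫ ω, XA ω ∂μ) + DB XB -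
          (DA (fun ω => XA ω - Y' ω) + DB (fun ω => XB ω + Y' ω))) ∧
    -- consequence: maximizers correspond to minimizers of the inf-convolution problem
    (∀ Y'star : Ω → ℝ, MemLp Y'star 2 μ →
      ((∀ Y' : Ω → ℝ, MemLp Y' 2 μ →
          devUtility μ DA (fun ω => XA ω - (Y' ω - devPrice μ DB XB Y')) ≤
            devUtility μ DA (fun ω => XA ω - (Y'star ω - devPrice μ DB XB Y'star))) ↔
        (∀ Y : Ω → ℝ, MemLp Y 2 μ →
          DA (fun ω => XA ω + XB ω - (Y'star ω + XB ω)) +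
              DB (fun ω => Y'star ω + XB ω) ≤
            DA (fun ω => XA ω + XB ω - Y ω) + DB Y))) :=
  risk_sharing_reduces_to_infConvolution_general μ DA DB hDAtrans hDBtrans XA XB hXA hXB
end
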